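/- arXiv:2308.15702 — 3 statements merged into one kernel-verified Lean document; each statement's English description precedes it below -/
import Mathlib

section
/- Let K = K¹ ⊔_σ K² be a wedge-decomposable simplicial complex on [m] with no ghost vertices, let ρ = V(K¹), τ = V(K²), and L = ⟨ρ⟩ ⊔_σ ⟨τ⟩. For each n ≥ 1, the inclusion-induced maps give a short exact sequence of cochain complexes in cohomological degrees l ≥ 1: 0 → CH_n^*(Z_{K¹}) ⊕ CH_n^*(Z_{K²}) → CH_n^*(Z_K) → CH_n^*(Z_L) → 0; that is, for every l ≥ 1 the sequence 0 → CH_n^l(Z_{K¹}) ⊕ CH_n^l(Z_{K²}) → CH_n^l(Z_K) → CH_n^l(Z_L) → 0 is exact and both maps commute with the differentials d. -/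
/-! Everything happens summand by summand. For each `J`, `K_J = K¹_J ∪ K²_J` and
`L_J = ⟨ρ ∩ J⟩ ∪ ⟨τ ∩ J⟩`, and both unions have intersection the simplex `⟨σ ∩ J⟩`. By the cone
construction a simplex is acyclic (in every degree if it is nonempty, in degrees `≥ 0` if it is
empty). Mayer–Vietoris then gives injectivity, and exactness in the middle when `σ ∩ J ≠ ∅`.
When `σ ∩ J = ∅`, a cycle of `K_J` that bounds in `L_J` splits into pieces bounding in the two
simplices. The composite factors through the acyclic simplices `⟨ρ ∩ J⟩` and `⟨τ ∩ J⟩`.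
Mayer–Vietoris also makes `L_J` acyclic in degrees `≥ 1`. In degree `0`, `L_J` has the same
vertices as `K_J`, because `K` has no ghost vertices, and this gives surjectivity. Commutation
with `d` is the naturality of the inclusion-induced maps. -/

set_option maxHeartbeats 1000000
set_option synthInstance.maxHeartbeats 1000000

open scoped DirectSum

namespace DH

/-- An abstract simplicial complex on the finite (totally ordered) vertex set `S ⊆ ℕ`:
a collection of subsets of `S` containing `∅` and closed under taking subsets. -/
structure SComplex (S : Finset ℕ) : Type where
  faces : Set (Finset ℕ)
  empty_mem : ∅ ∈ faces
  faces_subset : ∀ ⦃σ : Finset ℕ⦄, σ ∈ faces → σ ⊆ S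
  down_closed : ∀ ⦃σ τ : Finset ℕ⦄, σ ∈ faces → τ ⊆ σ → τ ∈ faces

variable {S : Finset ℕ}

/-- `K` has no ghost vertices: every vertex of `S` is a face. -/
def NoGhosts (K : SComplex S) : Prop := ∀ x ∈ S, ({x} : Finset ℕ) ∈ K.faces

/-- The full subcomplex `K_J = {σ ∩ J : σ ∈ K}`. -/
def SComplex.restrict (K : SComplex S) (J : Finset ℕ) : SComplex S where
  faces := {τ | ∃ σ ∈ K.faces, τ = σ ∩ J}
  empty_mem := ⟨∅, K.empty_mem, by simp⟩
  faces_subset := by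
    rintro τ ⟨σ, hσ, rfl⟩
    exact Finset.inter_subset_left.trans (K.faces_subset hσ)
  down_closed := by
    rintro σ' τ ⟨σ, hσ, rfl⟩ hτ
    refine ⟨τ, K.down_closed hσ (hτ.trans Finset.inter_subset_left), ?_⟩
    exact (Finset.inter_eq_left.mpr (hτ.trans Finset.inter_subset_right)).symm

/-- The full simplex `⟨ρ⟩` on a vertex set `ρ ⊆ S`, viewed as a complex on `S`. -/
def simplexOn (ρ : Finset ℕ) (h : ρ ⊆ S) : SComplex S where
  faces := {τ | τ ⊆ ρ}
  empty_mem := Finset.empty_subset ρ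
  faces_subset := fun _ hσ => hσ.trans h
  down_closed := fun _ _ hσ hτ => hτ.trans hσ

/-- Union of two simplicial complexes on the same vertex set. -/
def SComplex.union (K1 K2 : SComplex S) : SComplex S where
  faces := K1.faces ∪ K2.faces
  empty_mem := Or.inl K1.empty_mem
  faces_subset := by
    rintro σ (h | h)
    exacts [K1.faces_subset h, K2.faces_subset h]
  down_closed := by
    rintro σ τ (h | h) hτ
    exacts [Or.inl (K1.down_closed h hτ), Or.inr (K2.down_closed h hτ)]

/-- `K = K¹ ⊔_σ K²` : `K` is the face sum of `K¹` and `K²` along the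
(possibly empty) face `σ`, which is a proper face of both. -/
structure IsFaceSum (K K1 K2 : SComplex S) (σ : Finset ℕ) : Prop where
  union : K.faces = K1.faces ∪ K2.faces
  inter : K1.faces ∩ K2.faces = {τ : Finset ℕ | τ ⊆ σ}
  mem1 : σ ∈ K1.faces
  mem2 : σ ∈ K2.faces
  proper1 : K1.faces ≠ {τ : Finset ℕ | τ ⊆ σ}
  proper2 : K2.faces ≠ {τ : Finset ℕ | τ ⊆ σ}

/-- `K` is wedge-decomposable if it is a face sum `K¹ ⊔_σ K²`. -/
def WedgeDecomposable (K : SComplex S) : Prop :=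
  ∃ K1 K2 : SComplex S, ∃ σ : Finset ℕ, IsFaceSum K K1 K2 σ

lemma IsFaceSum.le1 {K K1 K2 : SComplex S} {σ : Finset ℕ} (h : IsFaceSum K K1 K2 σ) :
    K1.faces ⊆ K.faces := h.union ▸ Set.subset_union_left

lemma IsFaceSum.le2 {K K1 K2 : SComplex S} {σ : Finset ℕ} (h : IsFaceSum K K1 K2 σ) :
    K2.faces ⊆ K.faces := h.union ▸ Set.subset_union_right

open Classical in
/-- The effective vertex set `V(K)`: the set of non-ghost vertices. -/
noncomputable def effVerts (K : SComplex S) : Finset ℕ :=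
  S.filter (fun x => ({x} : Finset ℕ) ∈ K.faces)

open Classical in
/-- The set of ghost vertices of `K`. -/
noncomputable def ghostVerts (K : SComplex S) : Finset ℕ :=
  S.filter (fun x => ({x} : Finset ℕ) ∉ K.faces)

open Classical in
lemma effVerts_subset (K : SComplex S) : effVerts K ⊆ S := Finset.filter_subset _ _

open Classical in
lemma face_subset_effVerts (K : SComplex S) {σ : Finset ℕ} (h : σ ∈ K.faces) :
    σ ⊆ effVerts K := by
  intro x hx
  rw [effVerts, Finset.mem_filter]
  exact ⟨K.faces_subset h hx, K.down_closed h (Finset.singleton_subset_iff.mpr hx)⟩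

/-- `L = ⟨V(K¹)⟩ ⊔_σ ⟨V(K²)⟩`, the face sum of the full simplices on the
effective vertex sets. -/
noncomputable def wedgeL (K1 K2 : SComplex S) : SComplex S :=
  (simplexOn (effVerts K1) (effVerts_subset K1)).union
    (simplexOn (effVerts K2) (effVerts_subset K2))

lemma le_wedgeL {K K1 K2 : SComplex S} {σ : Finset ℕ} (h : IsFaceSum K K1 K2 σ) :
    K.faces ⊆ (wedgeL K1 K2).faces := by
  intro τ hτ
  rw [h.union] at hτ
  rcases hτ with hτ | hτ
  · exact Or.inl (face_subset_effVerts K1 hτ)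
  · exact Or.inr (face_subset_effVerts K2 hτ)

/-! ### Reduced simplicial homology (augmented, ℤ coefficients) -/

/-- Faces of `K` with `k` vertices (so of dimension `k - 1`). -/
abbrev Face (K : SComplex S) (k : ℤ) : Type :=
  {σ : Finset ℕ // σ ∈ K.faces ∧ (σ.card : ℤ) = k}

/-- The group of augmented simplicial `ℤ`-chains of `K` spanned by faces with `k`
vertices (this is the chain group in homological degree `k - 1`; for `k = 0` it is
spanned by the empty face). -/
abbrev Chains (K : SComplex S) (k : ℤ) : Type := Face K k →₀ ℤ

open Classical in
/-- The simplicial boundary map, sending a face `σ` with `j` vertices to the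
alternating sum of its codimension-one subfaces (recorded in `Chains K k`;
it is the usual boundary when `k = j - 1`, and `0` otherwise). -/
noncomputable def bdry (K : SComplex S) (j k : ℤ) : Chains K j →+ Chains K k :=
  Finsupp.liftAddHom fun σ =>
    (zmultiplesHom (Chains K k)) (∑ x ∈ σ.1,
      ((-1 : ℤ) ^ ((σ.1.filter (fun y => y < x)).card)) •
        (if h : (σ.1.erase x ∈ K.faces ∧ (((σ.1.erase x).card : ℤ)) = k) then
          Finsupp.single (⟨σ.1.erase x, h⟩ : Face K k) (1 : ℤ) else 0))

/-- The subgroup of reduced `n`-cycles. -/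
noncomputable abbrev cycles (K : SComplex S) (n : ℤ) : AddSubgroup (Chains K (n + 1)) :=
  (bdry K (n + 1) n).ker

/-- The reduced `n`-boundaries, viewed inside the `n`-cycles. -/
noncomputable abbrev boundariesIn (K : SComplex S) (n : ℤ) : AddSubgroup (cycles K n) :=
  (bdry K (n + 2) (n + 1)).range.comap (cycles K n).subtype

/-- Reduced simplicial homology `H̃_n(K; ℤ)` of the simplicial complex `K`,
computed from the augmented simplicial chain complex. -/
noncomputable abbrev RH (K : SComplex S) (n : ℤ) : Type :=
  cycles K n ⧸ boundariesIn K n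

/-- The chain map induced by an inclusion of simplicial complexes. -/
noncomputable def chainMap {K1 K2 : SComplex S} (h : K1.faces ⊆ K2.faces) (k : ℤ) :
    Chains K1 k →+ Chains K2 k :=
  Finsupp.mapDomain.addMonoidHom (fun σ => (⟨σ.1, h σ.2.1, σ.2.2⟩ : Face K2 k))

open Classical in
lemma bdry_chainMap {K1 K2 : SComplex S} (h : K1.faces ⊆ K2.faces) (j k : ℤ) (c : Chains K1 j) :
    bdry K2 j k (chainMap h j c) = chainMap h k (bdry K1 j k c) := by
  have hmap : ∀ (K1 K2 : SComplex S) (h : K1.faces ⊆ K2.faces) (k : ℤ) (a : Face K1 k) (b : ℤ),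
      chainMap h k (Finsupp.single a b) =
        Finsupp.single (⟨a.1, h a.2.1, a.2.2⟩ : Face K2 k) b := by
    intro K1 K2 h k a b
    exact Finsupp.mapDomain_single
  induction c using Finsupp.induction_linear with
  | zero => simp
  | add f g hf hg => simp only [map_add, hf, hg]
  | single σ b =>
    rw [hmap, bdry, bdry, Finsupp.liftAddHom_apply_single, Finsupp.liftAddHom_apply_single,
      zmultiplesHom_apply, zmultiplesHom_apply, map_zsmul]
    congr 1
    rw [map_sum]
    refine Finset.sum_congr rfl fun x hx => ?_
    rw [map_zsmul]
    congr 1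
    by_cases hc : ((σ.1.erase x).card : ℤ) = k
    · have h1 : σ.1.erase x ∈ K1.faces ∧ ((σ.1.erase x).card : ℤ) = k :=
        ⟨K1.down_closed σ.2.1 (Finset.erase_subset _ _), hc⟩
      have h2 : σ.1.erase x ∈ K2.faces ∧ ((σ.1.erase x).card : ℤ) = k :=
        ⟨h h1.1, hc⟩
      rw [dif_pos h1, dif_pos h2, hmap]
    · have h1 : ¬(σ.1.erase x ∈ K1.faces ∧ ((σ.1.erase x).card : ℤ) = k) := fun h' => hc h'.2
      have h2 : ¬(σ.1.erase x ∈ K2.faces ∧ ((σ.1.erase x).card : ℤ) = k) := fun h' => hc h'.2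
      rw [dif_neg h1, dif_neg h2, map_zero]

/-- The map on cycles induced by an inclusion of simplicial complexes. -/
noncomputable def cycleMap {K1 K2 : SComplex S} (h : K1.faces ⊆ K2.faces) (n : ℤ) :
    cycles K1 n →+ cycles K2 n :=
  AddMonoidHom.codRestrict ((chainMap h (n + 1)).comp (cycles K1 n).subtype)
    (cycles K2 n) (by
      rintro ⟨x, hx⟩
      rw [AddMonoidHom.mem_ker]
      have hx0 : bdry K1 (n + 1) n x = 0 := hx
      show bdry K2 (n + 1) n (chainMap h (n + 1) x) = 0
      rw [bdry_chainMap h, hx0, map_zero])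

/-- The map `H̃_n(K¹) → H̃_n(K²)` induced by an inclusion `K¹ ⊆ K²` of
simplicial complexes. -/
noncomputable def inducedRH {K1 K2 : SComplex S} (h : K1.faces ⊆ K2.faces) (n : ℤ) :
    RH K1 n →+ RH K2 n :=
  QuotientAddGroup.map _ _ (cycleMap h n) (by
    rintro z hz
    obtain ⟨c, hc⟩ := hz
    refine ⟨chainMap h (n + 2) c, ?_⟩
    show bdry K2 (n + 2) (n + 1) (chainMap h (n + 2) c) = (cycleMap h n z : Chains K2 (n + 1))
    rw [bdry_chainMap h]
    show chainMap h (n + 1) (bdry K1 (n + 2) (n + 1) c) = chainMap h (n + 1) (z : Chains K1 (n + 1))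
    exact congrArg _ hc)

lemma cycleMap_comp {K1 K2 K3 : SComplex S} (h1 : K1.faces ⊆ K2.faces)
    (h2 : K2.faces ⊆ K3.faces) (n : ℤ) (z : cycles K1 n) :
    cycleMap h2 n (cycleMap h1 n z) = cycleMap (h1.trans h2) n z := by
  apply Subtype.ext
  show Finsupp.mapDomain _ (Finsupp.mapDomain _ (z : Chains K1 (n + 1))) = Finsupp.mapDomain _ _
  rw [← Finsupp.mapDomain_comp]
  rfl

lemma inducedRH_comp {K1 K2 K3 : SComplex S} (h1 : K1.faces ⊆ K2.faces)
    (h2 : K2.faces ⊆ K3.faces) (n : ℤ) (a : RH K1 n) :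
    inducedRH h2 n (inducedRH h1 n a) = inducedRH (h1.trans h2) n a := by
  induction a using QuotientAddGroup.induction_on with
  | H z =>
    show QuotientAddGroup.mk _ = QuotientAddGroup.mk _
    rw [cycleMap_comp]

lemma restrict_mono {K1 K2 : SComplex S} (h : K1.faces ⊆ K2.faces) (J : Finset ℕ) :
    (K1.restrict J).faces ⊆ (K2.restrict J).faces := by
  rintro τ ⟨σ, hσ, rfl⟩
  exact ⟨σ, h hσ, rfl⟩

lemma restrict_le_insert (K : SComplex S) (x : ℕ) (J : Finset ℕ) :
    (K.restrict J).faces ⊆ (K.restrict (insert x J)).faces := by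
  rintro τ ⟨σ, hσ, rfl⟩
  refine ⟨σ ∩ J, K.down_closed hσ Finset.inter_subset_left, ?_⟩
  exact (Finset.inter_eq_left.mpr
    (Finset.inter_subset_right.trans (Finset.subset_insert x J))).symm

/-! ### The double homology complex `CH` and double homology `HH` -/

/-- Index type: subsets `J ⊆ S` with `|J| = l`. -/
abbrev Idx (S : Finset ℕ) (l : ℤ) : Type := {J : Finset ℕ // J ⊆ S ∧ (J.card : ℤ) = l}

/-- `CH_n^l(Z_K) = ⊕_{J ⊆ S, |J| = l} H̃_{n-1}(K_J)`. -/
noncomputable abbrev CH (K : SComplex S) (n l : ℤ) : Type :=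
  ⨁ (J : Idx S l), RH (K.restrict J.1) (n - 1)

/-- The sign `ε(x, J) = (-1)^{#{j ∈ J : j < x}}`. -/
def eps (x : ℕ) (J : Finset ℕ) : ℤ := (-1 : ℤ) ^ ((J.filter (fun y => y < x)).card)

/-- The sign `(-1)^n` for `n : ℤ`. -/
def sgn (n : ℤ) : ℤ := (((-1 : ℤˣ) ^ n : ℤˣ) : ℤ)

set_option maxHeartbeats 1000000 in
open Classical in
/-- The differential of the double homology complex: on the summand indexed by
`J` (with `|J| = l`) it is `(-1)^n Σ_{x ∈ S∖J} ε(x,J) φ_{J,x}`, where `φ_{J,x}`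
is induced by the inclusion `K_J ↪ K_{J∪{x}}` (recorded in `CH K n l'`; it is
the actual differential when `l' = l + 1`, and `0` otherwise). -/
noncomputable def dCH (K : SComplex S) (n l l' : ℤ) : CH K n l →+ CH K n l' :=
  DirectSum.toAddMonoid fun J =>
    ∑ x ∈ S \ J.1,
      (sgn n * eps x J.1) •
        (if h : (insert x J.1 ⊆ S ∧ (((insert x J.1).card : ℤ)) = l') then
          (DirectSum.of (fun J' : Idx S l' => RH (K.restrict J'.1) (n - 1))
              (⟨insert x J.1, h⟩ : Idx S l')).comp
            (inducedRH (restrict_le_insert K x J.1) (n - 1))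
        else 0)

/-- The double homology `HH_n^l(Z_K)`: the `l`-th cohomology of `(CH_n^*(Z_K), d)`. -/
noncomputable abbrev HH (K : SComplex S) (n l : ℤ) : Type :=
  (dCH K n l (l + 1)).ker ⧸
    ((dCH K n (l - 1) l).range.comap (dCH K n l (l + 1)).ker.subtype)

set_option maxHeartbeats 1000000 in
/-- The map `CH_n^l(Z_{K¹}) → CH_n^l(Z_{K²})` induced by an inclusion `K¹ ⊆ K²`. -/
noncomputable def CHmap {K1 K2 : SComplex S} (h : K1.faces ⊆ K2.faces) (n l : ℤ) :
    CH K1 n l →+ CH K2 n l :=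
  DirectSum.toAddMonoid fun J =>
    (DirectSum.of (fun J' : Idx S l => RH (K2.restrict J'.1) (n - 1)) J).comp
      (inducedRH (restrict_mono h J.1) (n - 1))

set_option maxHeartbeats 2000000 in
open Classical in
/-- Naturality of the differential `d` with respect to inclusion-induced maps. -/
lemma CHmap_dCH {K1 K2 : SComplex S} (h : K1.faces ⊆ K2.faces) (n l l' : ℤ) :
    (CHmap h n l').comp (dCH K1 n l l') = (dCH K2 n l l').comp (CHmap h n l) := by
  refine DirectSum.addHom_ext fun J a => ?_
  simp only [AddMonoidHom.comp_apply, dCH, CHmap, DirectSum.toAddMonoid_of]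
  rw [AddMonoidHom.finset_sum_apply, AddMonoidHom.finset_sum_apply, map_sum]
  refine Finset.sum_congr rfl fun x hx => ?_
  rw [AddMonoidHom.smul_apply, AddMonoidHom.smul_apply, map_zsmul]
  congr 1
  by_cases hc : insert x J.1 ⊆ S ∧ ((insert x J.1).card : ℤ) = l'
  · rw [dif_pos hc, dif_pos hc]
    rw [AddMonoidHom.comp_apply, AddMonoidHom.comp_apply, DirectSum.toAddMonoid_of,
      AddMonoidHom.comp_apply]
    congr 1
    rw [inducedRH_comp, inducedRH_comp]
  · rw [dif_neg hc, dif_neg hc]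
    simp

set_option maxHeartbeats 2000000 in
/-- The map `HH_n^l(Z_{K¹}) → HH_n^l(Z_{K²})` induced by an inclusion `K¹ ⊆ K²`. -/
noncomputable def HHmap {K1 K2 : SComplex S} (h : K1.faces ⊆ K2.faces) (n l : ℤ) :
    HH K1 n l →+ HH K2 n l :=
  QuotientAddGroup.map _ _
    (AddMonoidHom.codRestrict
      ((CHmap h n l).comp (dCH K1 n l (l + 1)).ker.subtype)
      (dCH K2 n l (l + 1)).ker (by
        rintro ⟨x, hx⟩
        rw [AddMonoidHom.mem_ker]
        have hx0 : dCH K1 n l (l + 1) x = 0 := hx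
        show dCH K2 n l (l + 1) (CHmap h n l x) = 0
        have hnat := congrArg (fun f => f x) (CHmap_dCH h n l (l + 1))
        simp only [AddMonoidHom.comp_apply] at hnat
        rw [← hnat, hx0, map_zero]))
    (by
      rintro z hz
      obtain ⟨c, hc⟩ := hz
      refine ⟨CHmap h n (l - 1) c, ?_⟩
      have hnat := congrArg (fun f => f c) (CHmap_dCH h n (l - 1) l)
      simp only [AddMonoidHom.comp_apply] at hnat
      show dCH K2 n (l - 1) l (CHmap h n (l - 1) c) = CHmap h n l ((z : CH K1 n l))
      rw [← hnat]
      exact congrArg _ hc)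

/-! ### Path connectivity -/

/-- Two vertices are related if they span an edge of `K`. -/
def EdgeRel (K : SComplex S) (a b : ℕ) : Prop := ({a, b} : Finset ℕ) ∈ K.faces

/-- Reachability by a chain of edges. -/
def Reach (K : SComplex S) : ℕ → ℕ → Prop := Relation.ReflTransGen (EdgeRel K)

/-- `K` is path-connected: any two vertices are joined by a chain of edges. -/
def IsPathConnected (K : SComplex S) : Prop :=
  ∀ a b : ℕ, ({a} : Finset ℕ) ∈ K.faces → ({b} : Finset ℕ) ∈ K.faces → Reach K a b

/-- The number of path components of `K` (equivalence classes of vertices under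
the relation generated by sharing an edge). -/
noncomputable def numComponents (K : SComplex S) : ℕ :=
  Nat.card (Quot (fun a b : {x : ℕ // ({x} : Finset ℕ) ∈ K.faces} => Reach K a.1 b.1))

open Classical in
noncomputable def faceChain (K : SComplex S) (k : ℤ) (τ : Finset ℕ) : Chains K k :=
  if h : τ ∈ K.faces ∧ (τ.card : ℤ) = k then Finsupp.single ⟨τ, h⟩ 1 else 0

lemma faceChain_of_card_ne {K : SComplex S} {k : ℤ} {τ : Finset ℕ} (h : (τ.card : ℤ) ≠ k) :
    faceChain K k τ = 0 :=
  dif_neg fun h' => h h'.2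

lemma single_eq_smul_faceChain {K : SComplex S} {k : ℤ} (σ : Face K k) (b : ℤ) :
    Finsupp.single σ b = b • faceChain K k σ.1 := by
  rw [faceChain, dif_pos σ.2, Finsupp.smul_single_one]

lemma Chains.addHom_ext {K : SComplex S} {k : ℤ} {G : Type*} [AddCommGroup G]
    {f g : Chains K k →+ G}
    (h : ∀ τ ∈ K.faces, (τ.card : ℤ) = k → f (faceChain K k τ) = g (faceChain K k τ)) :
    f = g :=
  Finsupp.addHom_ext fun σ b => by
    rw [single_eq_smul_faceChain, map_zsmul, map_zsmul, h σ.1 σ.2.1 σ.2.2]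

lemma Chains.eq_zero_of_card_ne {K : SComplex S} {k : ℤ}
    (h : ∀ τ ∈ K.faces, (τ.card : ℤ) ≠ k) (c : Chains K k) : c = 0 := by
  ext τ
  exact absurd τ.2.2 (h τ.1 τ.2.1)

lemma bdry_faceChain (K : SComplex S) {j : ℤ} (k : ℤ) {τ : Finset ℕ} (hτ : τ ∈ K.faces)
    (hcard : (τ.card : ℤ) = j) :
    bdry K j k (faceChain K j τ) = ∑ x ∈ τ, eps x τ • faceChain K k (τ.erase x) := by
  rw [faceChain, dif_pos ⟨hτ, hcard⟩, bdry, Finsupp.liftAddHom_apply_single, zmultiplesHom_apply,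
    one_smul]
  rfl

lemma bdry_eq_zero_of_ne {K : SComplex S} {j k : ℤ} (h : k ≠ j - 1) (c : Chains K j) :
    bdry K j k c = 0 := by
  suffices bdry K j k = 0 from DFunLike.congr_fun this c
  refine Chains.addHom_ext fun τ hτ hcard => ?_
  rw [bdry_faceChain K k hτ hcard, AddMonoidHom.zero_apply]
  refine Finset.sum_eq_zero fun x hx => ?_
  rw [faceChain_of_card_ne, smul_zero]
  have := Finset.card_erase_add_one hx
  omega

lemma chainMap_faceChain {K1 K2 : SComplex S} (h : K1.faces ⊆ K2.faces) (k : ℤ)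
    {τ : Finset ℕ} (hτ : τ ∈ K1.faces) :
    chainMap h k (faceChain K1 k τ) = faceChain K2 k τ := by
  by_cases hcard : (τ.card : ℤ) = k
  · rw [faceChain, faceChain, dif_pos ⟨hτ, hcard⟩, dif_pos ⟨h hτ, hcard⟩]
    exact Finsupp.mapDomain_single
  · rw [faceChain_of_card_ne hcard, faceChain_of_card_ne hcard, map_zero]

lemma faceIncl_injective {K1 K2 : SComplex S} (h : K1.faces ⊆ K2.faces) (k : ℤ) :
    Function.Injective fun σ : Face K1 k => (⟨σ.1, h σ.2.1, σ.2.2⟩ : Face K2 k) :=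
  fun _ _ hστ => Subtype.ext (Subtype.mk.inj hστ)

lemma chainMap_injective {K1 K2 : SComplex S} (h : K1.faces ⊆ K2.faces) (k : ℤ) :
    Function.Injective (chainMap h k) :=
  Finsupp.mapDomain_injective (faceIncl_injective h k)

lemma chainMap_comp {K1 K2 K3 : SComplex S} (h1 : K1.faces ⊆ K2.faces)
    (h2 : K2.faces ⊆ K3.faces) (k : ℤ) (c : Chains K1 k) :
    chainMap h2 k (chainMap h1 k c) = chainMap (h1.trans h2) k c :=
  (Finsupp.mapDomain_comp ..).symm

lemma chainMap_apply_of_mem {K1 K2 : SComplex S} (h : K1.faces ⊆ K2.faces) {k : ℤ}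
    (c : Chains K1 k) (τ : Face K2 k) (hτ : τ.1 ∈ K1.faces) :
    chainMap h k c τ = c ⟨τ.1, hτ, τ.2.2⟩ :=
  Finsupp.mapDomain_apply (faceIncl_injective h k) c (⟨τ.1, hτ, τ.2.2⟩ : Face K1 k)

lemma chainMap_apply_of_notMem {K1 K2 : SComplex S} (h : K1.faces ⊆ K2.faces) {k : ℤ}
    (c : Chains K1 k) (τ : Face K2 k) (hτ : τ.1 ∉ K1.faces) :
    chainMap h k c τ = 0 :=
  Finsupp.mapDomain_of_notMem_range _ _ fun ⟨σ, hσ⟩ => hτ (hσ ▸ σ.2.1)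

lemma exists_chainMap_eq {K1 K2 : SComplex S} (h : K1.faces ⊆ K2.faces) {k : ℤ}
    (c : Chains K2 k) (hc : ∀ τ : Face K2 k, c τ ≠ 0 → τ.1 ∈ K1.faces) :
    ∃ c' : Chains K1 k, chainMap h k c' = c := by
  refine ⟨Finsupp.comapDomain (fun σ : Face K1 k => (⟨σ.1, h σ.2.1, σ.2.2⟩ : Face K2 k)) c
    (faceIncl_injective h k).injOn, ?_⟩
  ext τ
  by_cases hτ : τ.1 ∈ K1.faces
  · rw [chainMap_apply_of_mem h _ τ hτ, Finsupp.comapDomain_apply]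
  · rw [chainMap_apply_of_notMem h _ τ hτ]
    exact not_not.mp fun hne => hτ (hc τ (Ne.symm hne))

lemma eps_eq_mul_eps_erase {x y : ℕ} {σ : Finset ℕ} (hx : x ∈ σ) :
    eps y σ = (if x < y then -1 else 1) * eps y (σ.erase x) := by
  unfold eps
  rw [Finset.filter_erase]
  split_ifs with hxy
  · rw [← Finset.card_erase_add_one (Finset.mem_filter.mpr ⟨hx, hxy⟩), pow_succ]
    ring
  · have hx' : x ∉ σ.filter (· < y) := fun h => hxy (Finset.mem_filter.mp h).2
    rw [Finset.erase_eq_of_notMem hx', one_mul]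

lemma eps_insert {x y : ℕ} {σ : Finset ℕ} (hx : x ∉ σ) :
    eps y (insert x σ) = (if x < y then -1 else 1) * eps y σ := by
  rw [eps_eq_mul_eps_erase (Finset.mem_insert_self x σ), Finset.erase_insert hx]

lemma eps_erase_self (x : ℕ) (σ : Finset ℕ) : eps x (σ.erase x) = eps x σ := by
  by_cases hx : x ∈ σ
  · rw [eps_eq_mul_eps_erase (y := x) hx, if_neg (lt_irrefl x), one_mul]
  · rw [Finset.erase_eq_of_notMem hx]

lemma eps_mul_self (x : ℕ) (σ : Finset ℕ) : eps x σ * eps x σ = 1 := by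
  rw [eps, ← pow_add, Even.neg_one_pow ⟨_, rfl⟩]

lemma eps_mul_eps_erase_antisymm {x y : ℕ} {σ : Finset ℕ} (hx : x ∈ σ) (hy : y ∈ σ)
    (hxy : x ≠ y) :
    eps x σ * eps y (σ.erase x) = -(eps y σ * eps x (σ.erase y)) := by
  rw [eps_eq_mul_eps_erase (y := y) hx, eps_eq_mul_eps_erase (y := x) hy]
  rcases hxy.lt_or_gt with h | h
  · rw [if_pos h, if_neg (not_lt.mpr h.le)]
    ring
  · rw [if_neg (not_lt.mpr h.le), if_pos h]
    ring

lemma eps_mul_eps_insert_antisymm {x v : ℕ} {α : Finset ℕ} (hx : x ∈ α) (hv : v ∉ α) :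
    eps v α * eps x (insert v α) = -(eps x α * eps v (α.erase x)) := by
  have hxv : x ≠ v := fun h => hv (h ▸ hx)
  rw [eps_insert (y := x) hv, eps_eq_mul_eps_erase (y := v) hx]
  rcases hxv.lt_or_gt with h | h
  · rw [if_pos h, if_neg (not_lt.mpr h.le)]
    ring
  · rw [if_neg (not_lt.mpr h.le), if_pos h]
    ring

lemma bdry_bdry (K : SComplex S) (j k l : ℤ) (c : Chains K j) :
    bdry K k l (bdry K j k c) = 0 := by
  rcases eq_or_ne k (j - 1) with rfl | hk
  swap
  · rw [bdry_eq_zero_of_ne hk, map_zero]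
  rcases eq_or_ne l (j - 1 - 1) with rfl | hl
  swap
  · exact bdry_eq_zero_of_ne hl _
  suffices (bdry K (j - 1) (j - 1 - 1)).comp (bdry K j (j - 1)) = 0 from
    DFunLike.congr_fun this c
  refine Chains.addHom_ext fun σ hσ hcard => ?_
  have hterm : ∀ x ∈ σ, bdry K (j - 1) (j - 1 - 1) (eps x σ • faceChain K (j - 1) (σ.erase x)) =
      ∑ y ∈ σ.erase x,
        (eps x σ * eps y (σ.erase x)) • faceChain K (j - 1 - 1) ((σ.erase x).erase y) := by
    intro x hx
    have := Finset.card_erase_add_one hx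
    rw [map_zsmul, bdry_faceChain K _ (K.down_closed hσ (Finset.erase_subset x σ)) (by omega),
      Finset.smul_sum]
    simp only [smul_smul]
  rw [AddMonoidHom.comp_apply, bdry_faceChain K _ hσ hcard, map_sum, Finset.sum_congr rfl hterm,
    ← Finset.sum_finset_product' σ.offDiag σ (fun x => σ.erase x) (by aesop),
    AddMonoidHom.zero_apply]
  refine Finset.sum_involution (fun p _ => p.swap) (fun p hp => ?_) (fun p hp _ => ?_)
    (fun p hp => by simp only [Finset.mem_offDiag] at hp ⊢; tauto) (fun p _ => p.swap_swap)
  · obtain ⟨hx, hy, hxy⟩ := Finset.mem_offDiag.mp hp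
    rw [Prod.fst_swap, Prod.snd_swap, Finset.erase_right_comm,
      eps_mul_eps_erase_antisymm hx hy hxy, neg_smul, neg_add_cancel]
  · exact fun h => (Finset.mem_offDiag.mp hp).2.2 (congrArg Prod.snd h)

noncomputable def cone (M : SComplex S) (v : ℕ) (k k' : ℤ) : Chains M k →+ Chains M k' :=
  Finsupp.liftAddHom fun α => zmultiplesHom _
    (if v ∈ α.1 then 0 else eps v α.1 • faceChain M k' (insert v α.1))

lemma cone_faceChain (M : SComplex S) (v : ℕ) {k : ℤ} (k' : ℤ) {α : Finset ℕ}
    (hα : α ∈ M.faces) (hcard : (α.card : ℤ) = k) :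
    cone M v k k' (faceChain M k α) =
      if v ∈ α then 0 else eps v α • faceChain M k' (insert v α) := by
  rw [faceChain, dif_pos ⟨hα, hcard⟩, cone, Finsupp.liftAddHom_apply_single, zmultiplesHom_apply,
    one_smul]

/-- The neighbouring degrees `j = k + 1` and `l = k - 1` are variables because
`Chains M (k + 2)` and `Chains M (k + 1 + 1)` are not definitionally equal types. -/
lemma bdry_cone_add_cone_bdry {M : SComplex S} {v : ℕ}
    (hv : ∀ α ∈ M.faces, insert v α ∈ M.faces) {j k l : ℤ} (hj : j = k + 1) (hl : l = k - 1)
    (c : Chains M k) :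
    bdry M j k (cone M v k j c) + cone M v l k (bdry M k l c) = c := by
  subst hj hl
  suffices (bdry M (k + 1) k).comp (cone M v k (k + 1)) +
      (cone M v (k - 1) k).comp (bdry M k (k - 1)) = AddMonoidHom.id _ from
    DFunLike.congr_fun this c
  refine Chains.addHom_ext fun α hα hcard => ?_
  have hface : ∀ x ∈ α, α.erase x ∈ M.faces ∧ ((α.erase x).card : ℤ) = k - 1 := fun x hx =>
    ⟨M.down_closed hα (Finset.erase_subset x α), by have := Finset.card_erase_add_one hx; omega⟩
  simp only [AddMonoidHom.add_apply, AddMonoidHom.comp_apply, AddMonoidHom.id_apply,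
    bdry_faceChain M _ hα hcard, cone_faceChain M v _ hα hcard, map_sum, map_zsmul]
  by_cases hvα : v ∈ α
  · rw [if_pos hvα, map_zero, zero_add, Finset.sum_eq_single v]
    · rw [cone_faceChain M v _ (hface v hvα).1 (hface v hvα).2, if_neg (Finset.notMem_erase v α),
        Finset.insert_erase hvα, smul_smul, eps_erase_self, eps_mul_self, one_smul]
    · intro x hx hxv
      rw [cone_faceChain M v _ (hface x hx).1 (hface x hx).2,
        if_pos (Finset.mem_erase.mpr ⟨Ne.symm hxv, hvα⟩), smul_zero]
    · exact fun h => absurd hvα h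
  · have hins : insert v α ∈ M.faces ∧ ((insert v α).card : ℤ) = k + 1 := by
      refine ⟨hv α hα, ?_⟩
      rw [Finset.card_insert_of_notMem hvα]
      push_cast
      omega
    rw [if_neg hvα, map_zsmul, bdry_faceChain M _ hins.1 hins.2, Finset.sum_insert hvα,
      Finset.erase_insert hvα, eps_insert hvα, if_neg (lt_irrefl v), one_mul, smul_add, smul_smul,
      eps_mul_self, one_smul, add_assoc, add_eq_left, Finset.smul_sum, ← Finset.sum_add_distrib]
    refine Finset.sum_eq_zero fun x hx => ?_
    have hxv : x ≠ v := fun h => hvα (h ▸ hx)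
    rw [cone_faceChain M v _ (hface x hx).1 (hface x hx).2,
      if_neg fun h => hvα (Finset.mem_of_mem_erase h), Finset.erase_insert_of_ne (Ne.symm hxv),
      smul_smul, smul_smul, eps_mul_eps_insert_antisymm hx hvα, neg_smul, neg_add_cancel]

lemma RH.mk_eq_zero_iff {M : SComplex S} {k : ℤ} (z : cycles M k) :
    (QuotientAddGroup.mk z : RH M k) = 0 ↔
      ∃ c : Chains M (k + 2), bdry M (k + 2) (k + 1) c = z :=
  QuotientAddGroup.eq_zero_iff z

lemma inducedRH_mk {K1 K2 : SComplex S} (h : K1.faces ⊆ K2.faces) (k : ℤ) (z : cycles K1 k) :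
    inducedRH h k (QuotientAddGroup.mk z) = QuotientAddGroup.mk (cycleMap h k z) :=
  rfl

lemma subsingleton_RH_of_cone {M : SComplex S} {v : ℕ}
    (hv : ∀ α ∈ M.faces, insert v α ∈ M.faces) (k : ℤ) : Subsingleton (RH M k) := by
  refine subsingleton_of_forall_eq 0 fun x => ?_
  obtain ⟨z, rfl⟩ := QuotientAddGroup.mk_surjective x
  refine (RH.mk_eq_zero_iff z).mpr ⟨cone M v (k + 1) (k + 2) z, ?_⟩
  have := bdry_cone_add_cone_bdry hv (j := k + 2) (l := k) (by ring) (by ring) z.1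
  rwa [AddMonoidHom.mem_ker.mp z.2, map_zero, add_zero] at this

lemma subsingleton_RH_of_card_ne {M : SComplex S} {k : ℤ}
    (h : ∀ τ ∈ M.faces, (τ.card : ℤ) ≠ k + 1) : Subsingleton (RH M k) := by
  refine subsingleton_of_forall_eq 0 fun x => ?_
  obtain ⟨z, rfl⟩ := QuotientAddGroup.mk_surjective x
  rw [show z = 0 from Subtype.ext (Chains.eq_zero_of_card_ne h z.1)]
  rfl

lemma subsingleton_RH_simplexOn (t : Finset ℕ) (ht : t ⊆ S) {k : ℤ} (htk : t.Nonempty ∨ 0 ≤ k) :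
    Subsingleton (RH (simplexOn t ht) k) := by
  rcases t.eq_empty_or_nonempty with rfl | ⟨v, hv⟩
  · refine subsingleton_RH_of_card_ne fun τ hτ => ?_
    rw [Finset.subset_empty.mp hτ]
    simp only [Finset.not_nonempty_empty, false_or] at htk
    simp only [Finset.card_empty, Nat.cast_zero]
    omega
  · exact subsingleton_RH_of_cone (M := simplexOn t ht) (fun _ hα => Finset.insert_subset hv hα) k

lemma exists_bdry_eq_of_subsingleton {M : SComplex S} {k : ℤ} [Subsingleton (RH M k)]
    {i j : ℤ} (hi : i = k + 1) (hj : j = k + 2) (z : Chains M i) (hz : bdry M i k z = 0) :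
    ∃ c : Chains M j, bdry M j i c = z := by
  subst hi hj
  exact (RH.mk_eq_zero_iff ⟨z, hz⟩).mp (Subsingleton.elim _ _)

lemma inducedRH_eq_zero_of_subsingleton {K1 K2 K3 : SComplex S} (h12 : K1.faces ⊆ K2.faces)
    (h23 : K2.faces ⊆ K3.faces) (h13 : K1.faces ⊆ K3.faces) {k : ℤ} [Subsingleton (RH K2 k)]
    (a : RH K1 k) : inducedRH h13 k a = 0 := by
  rw [← inducedRH_comp h12 h23, Subsingleton.elim (inducedRH h12 k a) 0, map_zero]

lemma inducedRH_surjective_of_faces_mem {M V : SComplex S} (h : M.faces ⊆ V.faces) (k : ℤ)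
    (hV : ∀ τ ∈ V.faces, (τ.card : ℤ) = k + 1 → τ ∈ M.faces) :
    Function.Surjective (inducedRH h k) := by
  intro y
  obtain ⟨z, rfl⟩ := QuotientAddGroup.mk_surjective y
  obtain ⟨z', hz'⟩ := exists_chainMap_eq h z.1 fun τ _ => hV τ.1 τ.2.1 τ.2.2
  have hcycle : bdry M (k + 1) k z' = 0 := by
    refine chainMap_injective h k ?_
    rw [← bdry_chainMap, hz', map_zero]
    exact z.2
  exact ⟨QuotientAddGroup.mk ⟨z', hcycle⟩, congrArg QuotientAddGroup.mk (Subtype.ext hz')⟩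

structure IsMVSquare (M A B C : SComplex S) : Prop where
  union : M.faces = A.faces ∪ B.faces
  inter : C.faces = A.faces ∩ B.faces

namespace IsMVSquare

variable {M A B C : SComplex S}

lemma left_le (hM : IsMVSquare M A B C) : A.faces ⊆ M.faces :=
  hM.union ▸ Set.subset_union_left

lemma right_le (hM : IsMVSquare M A B C) : B.faces ⊆ M.faces :=
  hM.union ▸ Set.subset_union_right

lemma inter_le_left (hM : IsMVSquare M A B C) : C.faces ⊆ A.faces :=
  hM.inter ▸ Set.inter_subset_left

lemma inter_le_right (hM : IsMVSquare M A B C) : C.faces ⊆ B.faces :=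
  hM.inter ▸ Set.inter_subset_right

lemma exists_chain_decomp (hM : IsMVSquare M A B C) (k : ℤ) (c : Chains M k) :
    ∃ (a : Chains A k) (b : Chains B k),
      chainMap hM.left_le k a + chainMap hM.right_le k b = c := by
  induction c using Finsupp.induction_linear with
  | zero => exact ⟨0, 0, by rw [map_zero, map_zero, add_zero]⟩
  | add f g hf hg =>
    obtain ⟨a1, b1, rfl⟩ := hf
    obtain ⟨a2, b2, rfl⟩ := hg
    exact ⟨a1 + a2, b1 + b2, by rw [map_add, map_add]; abel⟩
  | single σ b =>
    rw [single_eq_smul_faceChain]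
    rcases (hM.union ▸ σ.2.1 : σ.1 ∈ A.faces ∪ B.faces) with hσ | hσ
    · exact ⟨b • faceChain A k σ.1, 0,
        by rw [map_zero, add_zero, map_zsmul, chainMap_faceChain _ _ hσ]⟩
    · exact ⟨0, b • faceChain B k σ.1,
        by rw [map_zero, zero_add, map_zsmul, chainMap_faceChain _ _ hσ]⟩

lemma exists_chain_of_chainMap_eq (hM : IsMVSquare M A B C) {k : ℤ} {a : Chains A k}
    {b : Chains B k} (h : chainMap hM.left_le k a = chainMap hM.right_le k b) :
    ∃ w : Chains C k, chainMap hM.inter_le_left k w = a ∧ chainMap hM.inter_le_right k w = b := by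
  have hsupp : ∀ τ : Face A k, a τ ≠ 0 → τ.1 ∈ C.faces := by
    intro τ hτ
    rw [hM.inter]
    refine ⟨τ.2.1, not_not.mp fun hB => hτ ?_⟩
    have := chainMap_apply_of_mem hM.left_le a ⟨τ.1, hM.left_le τ.2.1, τ.2.2⟩ τ.2.1
    rwa [h, chainMap_apply_of_notMem hM.right_le b _ hB, eq_comm] at this
  obtain ⟨w, hw⟩ := exists_chainMap_eq hM.inter_le_left a hsupp
  refine ⟨w, hw, chainMap_injective hM.right_le k ?_⟩
  rw [← h, ← hw, chainMap_comp, chainMap_comp]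

lemma injective_coprod (hM : IsMVSquare M A B C) (k : ℤ) [Subsingleton (RH C k)] :
    Function.Injective ((inducedRH hM.left_le k).coprod (inducedRH hM.right_le k)) := by
  rw [injective_iff_map_eq_zero]
  rintro ⟨a, b⟩ hab
  obtain ⟨za, rfl⟩ := QuotientAddGroup.mk_surjective a
  obtain ⟨zb, rfl⟩ := QuotientAddGroup.mk_surjective b
  rw [AddMonoidHom.coprod_apply, inducedRH_mk, inducedRH_mk, ← QuotientAddGroup.mk_add,
    RH.mk_eq_zero_iff] at hab
  obtain ⟨c, hc⟩ := hab
  obtain ⟨c1, c2, rfl⟩ := hM.exists_chain_decomp _ c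
  have heq : chainMap hM.left_le (k + 1) (bdry A (k + 2) (k + 1) c1 - za) =
      chainMap hM.right_le (k + 1) (zb - bdry B (k + 2) (k + 1) c2) := by
    rw [map_add] at hc
    rw [map_sub, map_sub, ← bdry_chainMap, ← bdry_chainMap, sub_eq_sub_iff_add_eq_add, hc]
    exact add_comm _ _
  obtain ⟨w, hwA, hwB⟩ := hM.exists_chain_of_chainMap_eq heq
  have hw : bdry C (k + 1) k w = 0 := by
    refine chainMap_injective hM.inter_le_left k ?_
    rw [← bdry_chainMap, hwA, map_sub, bdry_bdry, AddMonoidHom.mem_ker.mp za.2, sub_zero, map_zero]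
  obtain ⟨r, hr⟩ := exists_bdry_eq_of_subsingleton (j := k + 2) rfl rfl w hw
  refine Prod.ext ((RH.mk_eq_zero_iff za).mpr ⟨c1 - chainMap hM.inter_le_left (k + 2) r, ?_⟩)
    ((RH.mk_eq_zero_iff zb).mpr ⟨c2 + chainMap hM.inter_le_right (k + 2) r, ?_⟩)
  · rw [map_sub, bdry_chainMap, hr, hwA, sub_sub_cancel]
  · rw [map_add, bdry_chainMap, hr, hwB, add_sub_cancel]

lemma surjective_coprod (hM : IsMVSquare M A B C) (k : ℤ) [Subsingleton (RH C (k - 1))] :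
    Function.Surjective ((inducedRH hM.left_le k).coprod (inducedRH hM.right_le k)) := by
  intro u
  obtain ⟨z, rfl⟩ := QuotientAddGroup.mk_surjective u
  obtain ⟨z1, z2, hz⟩ := hM.exists_chain_decomp _ z.1
  have heq : chainMap hM.left_le k (bdry A (k + 1) k z1) =
      chainMap hM.right_le k (-bdry B (k + 1) k z2) := by
    rw [map_neg, ← bdry_chainMap, ← bdry_chainMap, eq_neg_iff_add_eq_zero, ← map_add, hz]
    exact z.2
  obtain ⟨w, hwA, hwB⟩ := hM.exists_chain_of_chainMap_eq heq
  have hw : bdry C k (k - 1) w = 0 := by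
    refine chainMap_injective hM.inter_le_left (k - 1) ?_
    rw [← bdry_chainMap, hwA, bdry_bdry, map_zero]
  obtain ⟨r, hr⟩ := exists_bdry_eq_of_subsingleton (j := k + 1) (by ring) (by ring) w hw
  have hcycA : bdry A (k + 1) k (z1 - chainMap hM.inter_le_left (k + 1) r) = 0 := by
    rw [map_sub, bdry_chainMap, hr, hwA, sub_self]
  have hcycB : bdry B (k + 1) k (z2 + chainMap hM.inter_le_right (k + 1) r) = 0 := by
    rw [map_add, bdry_chainMap, hr, hwB, add_neg_cancel]
  refine ⟨(QuotientAddGroup.mk ⟨_, hcycA⟩, QuotientAddGroup.mk ⟨_, hcycB⟩), ?_⟩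
  rw [AddMonoidHom.coprod_apply, inducedRH_mk, inducedRH_mk, ← QuotientAddGroup.mk_add]
  refine congrArg QuotientAddGroup.mk (Subtype.ext ?_)
  change chainMap hM.left_le (k + 1) (z1 - chainMap hM.inter_le_left (k + 1) r) +
    chainMap hM.right_le (k + 1) (z2 + chainMap hM.inter_le_right (k + 1) r) = z.1
  rw [map_sub, map_add, chainMap_comp, chainMap_comp, ← hz]
  abel

lemma subsingleton_RH (hM : IsMVSquare M A B C) (k : ℤ) [Subsingleton (RH A k)]
    [Subsingleton (RH B k)] [Subsingleton (RH C (k - 1))] : Subsingleton (RH M k) := by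
  refine subsingleton_of_forall_eq 0 fun u => ?_
  obtain ⟨⟨a, b⟩, rfl⟩ := hM.surjective_coprod k u
  rw [Subsingleton.elim a 0, Subsingleton.elim b 0]
  exact map_zero _

/-- Since `A' ∩ B'` has no faces of the size of the cycles, a cycle of `M` bounding in `V` splits
into pieces bounding in `A'` and in `B'` separately, and these pieces are cycles of `A` and `B`. -/
lemma exists_coprod_eq_of_inducedRH_eq_zero {V A' B' C' : SComplex S} (hM : IsMVSquare M A B C)
    (hV : IsMVSquare V A' B' C') (hA : A.faces ⊆ A'.faces) (hB : B.faces ⊆ B'.faces)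
    (hMV : M.faces ⊆ V.faces) {k : ℤ} (hC' : ∀ τ ∈ C'.faces, (τ.card : ℤ) ≠ k + 1)
    (u : RH M k) (hu : inducedRH hMV k u = 0) :
    ∃ p, (inducedRH hM.left_le k).coprod (inducedRH hM.right_le k) p = u := by
  obtain ⟨z, rfl⟩ := QuotientAddGroup.mk_surjective u
  rw [inducedRH_mk, RH.mk_eq_zero_iff] at hu
  obtain ⟨e, he⟩ := hu
  obtain ⟨z1, z2, hz⟩ := hM.exists_chain_decomp _ z.1
  obtain ⟨e1, e2, rfl⟩ := hV.exists_chain_decomp _ e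
  have heq : chainMap hV.left_le (k + 1) (bdry A' (k + 2) (k + 1) e1 - chainMap hA (k + 1) z1) =
      chainMap hV.right_le (k + 1) (chainMap hB (k + 1) z2 - bdry B' (k + 2) (k + 1) e2) := by
    rw [map_sub, map_sub, ← bdry_chainMap, ← bdry_chainMap, chainMap_comp, chainMap_comp,
      sub_eq_sub_iff_add_eq_add, ← map_add, he]
    change chainMap hMV (k + 1) z.1 = _
    rw [← hz, map_add, chainMap_comp, chainMap_comp]
    exact add_comm _ _
  obtain ⟨w, hw1, hw2⟩ := hV.exists_chain_of_chainMap_eq heq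
  rw [Chains.eq_zero_of_card_ne hC' w, map_zero, eq_comm, sub_eq_zero] at hw1 hw2
  have hcyc1 : bdry A (k + 1) k z1 = 0 :=
    chainMap_injective hA k (by rw [← bdry_chainMap, ← hw1, bdry_bdry, map_zero])
  have hcyc2 : bdry B (k + 1) k z2 = 0 :=
    chainMap_injective hB k (by rw [← bdry_chainMap, hw2, bdry_bdry, map_zero])
  refine ⟨(QuotientAddGroup.mk ⟨z1, hcyc1⟩, QuotientAddGroup.mk ⟨z2, hcyc2⟩), ?_⟩
  rw [AddMonoidHom.coprod_apply, inducedRH_mk, inducedRH_mk, ← QuotientAddGroup.mk_add]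
  exact congrArg QuotientAddGroup.mk (Subtype.ext hz)

end IsMVSquare

lemma SComplex.mem_restrict {K : SComplex S} {J τ : Finset ℕ} :
    τ ∈ (K.restrict J).faces ↔ τ ∈ K.faces ∧ τ ⊆ J := by
  refine ⟨?_, fun h => ⟨τ, h.1, (Finset.inter_eq_left.mpr h.2).symm⟩⟩
  rintro ⟨β, hβ, rfl⟩
  exact ⟨K.down_closed hβ Finset.inter_subset_left, Finset.inter_subset_right⟩

lemma mem_effVerts {K : SComplex S} {x : ℕ} : x ∈ effVerts K ↔ ({x} : Finset ℕ) ∈ K.faces := by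
  classical
  rw [effVerts, Finset.mem_filter, and_iff_right_iff_imp]
  exact fun h => K.faces_subset h (Finset.mem_singleton_self x)

lemma restrict_le_simplexOn_effVerts (K : SComplex S) (J : Finset ℕ) :
    (K.restrict J).faces ⊆
      (simplexOn (effVerts K ∩ J) (Finset.inter_subset_left.trans (effVerts_subset K))).faces :=
  fun _ hτ => Finset.subset_inter (face_subset_effVerts K (SComplex.mem_restrict.mp hτ).1)
    (SComplex.mem_restrict.mp hτ).2

namespace IsFaceSum

variable {K K1 K2 : SComplex S} {σ : Finset ℕ}

lemma sigma_subset (hK : IsFaceSum K K1 K2 σ) : σ ⊆ S :=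
  K1.faces_subset hK.mem1

lemma mem_and_mem_iff (hK : IsFaceSum K K1 K2 σ) {τ : Finset ℕ} :
    τ ∈ K1.faces ∧ τ ∈ K2.faces ↔ τ ⊆ σ :=
  Set.ext_iff.mp hK.inter τ

lemma effVerts_inter_effVerts (hK : IsFaceSum K K1 K2 σ) : effVerts K1 ∩ effVerts K2 = σ := by
  ext x
  rw [Finset.mem_inter, mem_effVerts, mem_effVerts, hK.mem_and_mem_iff, Finset.singleton_subset_iff]

lemma isMVSquare_restrict (hK : IsFaceSum K K1 K2 σ) (J : Finset ℕ) :
    IsMVSquare (K.restrict J) (K1.restrict J) (K2.restrict J)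
      (simplexOn (σ ∩ J) (Finset.inter_subset_left.trans hK.sigma_subset)) where
  union := by
    ext τ
    simp only [Set.mem_union, SComplex.mem_restrict, hK.union, ← or_and_right]
  inter := by
    ext τ
    simp only [Set.mem_inter_iff, SComplex.mem_restrict, simplexOn, Set.mem_ofPred_eq,
      Finset.subset_inter_iff, ← hK.mem_and_mem_iff]
    tauto

lemma isMVSquare_wedgeL_restrict (hK : IsFaceSum K K1 K2 σ) (J : Finset ℕ) :
    IsMVSquare ((wedgeL K1 K2).restrict J)
      (simplexOn (effVerts K1 ∩ J) (Finset.inter_subset_left.trans (effVerts_subset K1)))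
      (simplexOn (effVerts K2 ∩ J) (Finset.inter_subset_left.trans (effVerts_subset K2)))
      (simplexOn (σ ∩ J) (Finset.inter_subset_left.trans hK.sigma_subset)) where
  union := by
    ext τ
    simp only [Set.mem_union, SComplex.mem_restrict, wedgeL, SComplex.union, simplexOn,
      Set.mem_ofPred_eq, Finset.subset_inter_iff, ← or_and_right]
  inter := by
    ext τ
    simp only [Set.mem_inter_iff, simplexOn, Set.mem_ofPred_eq, ← hK.effVerts_inter_effVerts,
      Finset.subset_inter_iff]
    tauto

lemma injective_coprod_restrict (hK : IsFaceSum K K1 K2 σ) (J : Finset ℕ) {k : ℤ} (hk : 0 ≤ k) :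
    Function.Injective
      ((inducedRH (restrict_mono hK.le1 J) k).coprod (inducedRH (restrict_mono hK.le2 J) k)) := by
  have := subsingleton_RH_simplexOn (k := k)
    (σ ∩ J) (Finset.inter_subset_left.trans hK.sigma_subset) (Or.inr hk)
  exact (hK.isMVSquare_restrict J).injective_coprod k

lemma exact_restrict (hK : IsFaceSum K K1 K2 σ) (J : Finset ℕ) {k : ℤ} (hk : 0 ≤ k) :
    Function.Exact
      ((inducedRH (restrict_mono hK.le1 J) k).coprod (inducedRH (restrict_mono hK.le2 J) k))
      (inducedRH (restrict_mono (le_wedgeL hK) J) k) := by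
  have hV := hK.isMVSquare_wedgeL_restrict J
  intro u
  constructor
  · intro hu
    by_cases hσJ : (σ ∩ J).Nonempty
    · have := subsingleton_RH_simplexOn (k := k - 1)
        (σ ∩ J) (Finset.inter_subset_left.trans hK.sigma_subset) (Or.inl hσJ)
      exact (hK.isMVSquare_restrict J).surjective_coprod k u
    · refine (hK.isMVSquare_restrict J).exists_coprod_eq_of_inducedRH_eq_zero hV
        (restrict_le_simplexOn_effVerts K1 J) (restrict_le_simplexOn_effVerts K2 J) _
        (fun τ hτ => ?_) u hu
      have hτ' : τ ⊆ σ ∩ J := hτ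
      rw [Finset.not_nonempty_iff_eq_empty.mp hσJ, Finset.subset_empty] at hτ'
      rw [hτ', Finset.card_empty, Nat.cast_zero]
      omega
  · rintro ⟨⟨a, b⟩, rfl⟩
    have := subsingleton_RH_simplexOn (k := k)
      (effVerts K1 ∩ J) (Finset.inter_subset_left.trans (effVerts_subset K1)) (Or.inr hk)
    have := subsingleton_RH_simplexOn (k := k)
      (effVerts K2 ∩ J) (Finset.inter_subset_left.trans (effVerts_subset K2)) (Or.inr hk)
    rw [AddMonoidHom.coprod_apply, map_add, inducedRH_comp, inducedRH_comp,
      inducedRH_eq_zero_of_subsingleton (restrict_le_simplexOn_effVerts K1 J) hV.left_le,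
      inducedRH_eq_zero_of_subsingleton (restrict_le_simplexOn_effVerts K2 J) hV.right_le,
      add_zero]

lemma surjective_restrict (hK : IsFaceSum K K1 K2 σ) (hng : NoGhosts K) (J : Finset ℕ) {k : ℤ}
    (hk : 0 ≤ k) : Function.Surjective (inducedRH (restrict_mono (le_wedgeL hK) J) k) := by
  have hV := hK.isMVSquare_wedgeL_restrict J
  rcases hk.eq_or_lt with rfl | hk
  · -- in degree zero every vertex of `L_J` is already a vertex of `K_J`
    refine inducedRH_surjective_of_faces_mem _ 0 fun τ hτ hcard => ?_
    obtain ⟨x, rfl⟩ := Finset.card_eq_one.mp (by omega : τ.card = 1)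
    have hxJ := (SComplex.mem_restrict.mp hτ).2
    refine SComplex.mem_restrict.mpr ⟨hng x ?_, hxJ⟩
    exact (wedgeL K1 K2).faces_subset (SComplex.mem_restrict.mp hτ).1 (Finset.mem_singleton_self x)
  · have := subsingleton_RH_simplexOn (k := k)
      (effVerts K1 ∩ J) (Finset.inter_subset_left.trans (effVerts_subset K1)) (Or.inr hk.le)
    have := subsingleton_RH_simplexOn (k := k)
      (effVerts K2 ∩ J) (Finset.inter_subset_left.trans (effVerts_subset K2)) (Or.inr hk.le)
    have := subsingleton_RH_simplexOn (k := k - 1)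
      (σ ∩ J) (Finset.inter_subset_left.trans hK.sigma_subset) (Or.inr (by omega))
    have := hV.subsingleton_RH k
    exact Function.surjective_to_subsingleton _

end IsFaceSum

section DirectSumMap

variable {ι : Type*} {α β γ δ : ι → Type*} [∀ i, AddCommGroup (α i)] [∀ i, AddCommGroup (β i)]
  [∀ i, AddCommGroup (γ i)] [∀ i, AddCommGroup (δ i)]
  (f : ∀ i, α i →+ γ i) (g : ∀ i, β i →+ γ i)

lemma _root_.DirectSum.coprod_map_apply (p : (⨁ i, α i) × (⨁ i, β i)) (i : ι) :
    (DirectSum.map f).coprod (DirectSum.map g) p i = (f i).coprod (g i) (p.1 i, p.2 i) := by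
  rw [AddMonoidHom.coprod_apply, DirectSum.add_apply, DirectSum.map_apply, DirectSum.map_apply]
  rfl

lemma _root_.DirectSum.injective_coprod_map (h : ∀ i, Function.Injective ((f i).coprod (g i))) :
    Function.Injective ((DirectSum.map f).coprod (DirectSum.map g)) := by
  rw [injective_iff_map_eq_zero]
  intro p hp
  have hpi : ∀ i, (p.1 i, p.2 i) = 0 := fun i =>
    (injective_iff_map_eq_zero _).mp (h i) _ (by rw [← DirectSum.coprod_map_apply, hp]; rfl)
  exact Prod.ext (DirectSum.ext fun i => congrArg Prod.fst (hpi i))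
    (DirectSum.ext fun i => congrArg Prod.snd (hpi i))

lemma _root_.DirectSum.exact_coprod_map (k : ∀ i, γ i →+ δ i)
    (h : ∀ i, Function.Exact ((f i).coprod (g i)) (k i)) :
    Function.Exact ((DirectSum.map f).coprod (DirectSum.map g)) (DirectSum.map k) := by
  classical
  intro z
  constructor
  · intro hz
    choose p hp using fun i => (h i (z i)).mp (by rw [← DirectSum.map_apply, hz]; rfl)
    refine ⟨(DFinsupp.mk z.support fun i => (p i).1, DFinsupp.mk z.support fun i => (p i).2),
      DirectSum.ext fun i => ?_⟩
    rw [DirectSum.coprod_map_apply, DFinsupp.mk_apply, DFinsupp.mk_apply]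
    split_ifs with hi
    · exact hp i
    · rw [DFinsupp.notMem_support_iff.mp hi]
      exact map_zero _
  · rintro ⟨p, rfl⟩
    refine DirectSum.ext fun i => ?_
    rw [DirectSum.map_apply, DirectSum.coprod_map_apply, (h i).apply_apply_eq_zero]
    rfl

end DirectSumMap

lemma _root_.AddMonoidHom.coprod_comp_prodMap {M N M' N' P : Type*} [AddCommGroup M]
    [AddCommGroup N] [AddCommGroup M'] [AddCommGroup N'] [AddCommGroup P] (f : M' →+ P)
    (g : N' →+ P) (f' : M →+ M') (g' : N →+ N') :
    (f.coprod g).comp (f'.prodMap g') = (f.comp f').coprod (g.comp g') :=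
  rfl

lemma CHmap_eq_map {K1 K2 : SComplex S} (h : K1.faces ⊆ K2.faces) (n l : ℤ) :
    CHmap h n l = DirectSum.map (fun J : Idx S l => inducedRH (restrict_mono h J.1) (n - 1)) := by
  refine DirectSum.addHom_ext fun J x => ?_
  rw [CHmap, DirectSum.toAddMonoid_of, DirectSum.map_of]
  rfl

theorem ses_of_cochain_complexes_general (m : ℕ) (K K1 K2 : SComplex (Finset.Icc 1 m))
    (σ : Finset ℕ) (hK : IsFaceSum K K1 K2 σ) (hng : NoGhosts K)
    (n : ℤ) (hn : 1 ≤ n) (l : ℤ) :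
    Function.Injective ⇑((CHmap hK.le1 n l).coprod (CHmap hK.le2 n l)) ∧
    Function.Exact ⇑((CHmap hK.le1 n l).coprod (CHmap hK.le2 n l))
      ⇑(CHmap (le_wedgeL hK) n l) ∧
    Function.Surjective ⇑(CHmap (le_wedgeL hK) n l) ∧
    (CHmap (le_wedgeL hK) n (l + 1)).comp (dCH K n l (l + 1)) =
      (dCH (wedgeL K1 K2) n l (l + 1)).comp (CHmap (le_wedgeL hK) n l) ∧
    ((CHmap hK.le1 n (l + 1)).coprod (CHmap hK.le2 n (l + 1))).comp
        ((dCH K1 n l (l + 1)).prodMap (dCH K2 n l (l + 1))) =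
      (dCH K n l (l + 1)).comp ((CHmap hK.le1 n l).coprod (CHmap hK.le2 n l)) := by
  have hk : 0 ≤ n - 1 := by omega
  refine ⟨?_, ?_, ?_, CHmap_dCH _ n l (l + 1), ?_⟩
  · rw [CHmap_eq_map, CHmap_eq_map]
    exact DirectSum.injective_coprod_map _ _ fun J => hK.injective_coprod_restrict J.1 hk
  · rw [CHmap_eq_map, CHmap_eq_map, CHmap_eq_map]
    exact DirectSum.exact_coprod_map _ _ _ fun J => hK.exact_restrict J.1 hk
  · rw [CHmap_eq_map]
    exact (DirectSum.map_surjective _).mpr fun J => hK.surjective_restrict hng J.1 hk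
  · rw [AddMonoidHom.coprod_comp_prodMap, CHmap_dCH, CHmap_dCH, AddMonoidHom.comp_coprod]

/-- For a wedge-decomposable `K = K¹ ⊔_σ K²` on `[m]` with no
ghost vertices and `L = ⟨V(K¹)⟩ ⊔_σ ⟨V(K²)⟩`, for each `n ≥ 1` and each `l ≥ 1`
the inclusion-induced maps give a short exact sequence
`0 → CH_n^l(Z_{K¹}) ⊕ CH_n^l(Z_{K²}) → CH_n^l(Z_K) → CH_n^l(Z_L) → 0`,
and both maps commute with the differentials `d`. -/
theorem ses_of_cochain_complexes (m : ℕ) (K K1 K2 : SComplex (Finset.Icc 1 m))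
    (σ : Finset ℕ) (hK : IsFaceSum K K1 K2 σ) (hng : NoGhosts K)
    (n : ℤ) (hn : 1 ≤ n) (l : ℤ) (hl : 1 ≤ l) :
    Function.Injective ⇑((CHmap hK.le1 n l).coprod (CHmap hK.le2 n l)) ∧
    Function.Exact ⇑((CHmap hK.le1 n l).coprod (CHmap hK.le2 n l))
      ⇑(CHmap (le_wedgeL hK) n l) ∧
    Function.Surjective ⇑(CHmap (le_wedgeL hK) n l) ∧
    (CHmap (le_wedgeL hK) n (l + 1)).comp (dCH K n l (l + 1)) =
      (dCH (wedgeL K1 K2) n l (l + 1)).comp (CHmap (le_wedgeL hK) n l) ∧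
    ((CHmap hK.le1 n (l + 1)).coprod (CHmap hK.le2 n (l + 1))).comp
        ((dCH K1 n l (l + 1)).prodMap (dCH K2 n l (l + 1))) =
      (dCH K n l (l + 1)).comp ((CHmap hK.le1 n l).coprod (CHmap hK.le2 n l)) :=
  ses_of_cochain_complexes_general m K K1 K2 σ hK hng n hn l

end DH
end

section
/- Let ρ and τ be finite sets of vertices with ρ ∩ τ = σ, and let L = ⟨ρ⟩ ⊔_σ ⟨τ⟩ = ⟨ρ⟩ ∪ ⟨τ⟩ be the face sum of the two full simplices along σ. If J is a subset of ρ ∪ τ with J ∩ σ = ∅, J ∩ ρ ≠ ∅ and J ∩ τ ≠ ∅, then L_J has exactly two path components (namely ⟨ρ⟩_J and ⟨τ⟩_J), and H̃_0(L_J) is infinite cyclic, generated by the class [y] − [x] for any choice of vertices x ∈ J ∩ ρ and y ∈ J ∩ τ. -/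
set_option maxHeartbeats 1000000
set_option synthInstance.maxHeartbeats 1000000

open scoped DirectSum

namespace DH

variable {S : Finset ℕ}

/-- The face sum `L = ⟨ρ⟩ ⊔_{ρ∩τ} ⟨τ⟩ = ⟨ρ⟩ ∪ ⟨τ⟩` of two full simplices, as a
simplicial complex on `ρ ∪ τ`. -/
noncomputable def simplexWedge (ρ τ : Finset ℕ) : SComplex (ρ ∪ τ) :=
  (simplexOn ρ Finset.subset_union_left).union (simplexOn τ Finset.subset_union_right)
/-! Since `J` misses `ρ ∩ τ`, the full subcomplex `L_J` consists of the faces of two disjoint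
simplices, on `J ∩ ρ` and on `J ∩ τ`: no edge joins them, while any two vertices of one of them
span an edge. In degree `0`, the coefficient sum over the vertices of `J ∩ τ` vanishes on
boundaries and equals `1` on `[y] - [x]`, which gives injectivity. Conversely every `0`-chain is
homologous to a combination of `[x]` and `[y]`, and for a cycle the two coefficients are opposite
because its augmentation vanishes. -/

lemma Face.exists_eq_singleton {K : SComplex S} (f : Face K (0 + 1)) : ∃ v, f.1 = {v} :=
  Finset.card_eq_one.mp (by have := f.2.2; omega)

lemma Face.exists_lt_eq_pair {K : SComplex S} (e : Face K (0 + 2)) :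
    ∃ a b, a < b ∧ e.1 = {a, b} := by
  obtain ⟨a, b, hne, he⟩ := (Finset.card_eq_two (s := e.1)).mp (by have := e.2.2; omega)
  rcases hne.lt_or_gt with hab | hba
  · exact ⟨a, b, hab, he⟩
  · exact ⟨b, a, hba, he.trans (Finset.pair_comm a b)⟩

noncomputable def augmentation (K : SComplex S) : Chains K (0 + 1) →+ ℤ :=
  Finsupp.liftAddHom fun _ => AddMonoidHom.id ℤ

noncomputable def coeffSum (K : SComplex S) (B : Finset ℕ) : Chains K (0 + 1) →+ ℤ :=
  Finsupp.liftAddHom fun f => if f.1 ⊆ B then AddMonoidHom.id ℤ else 0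

lemma augmentation_single (K : SComplex S) (f : Face K (0 + 1)) (n : ℤ) :
    augmentation K (Finsupp.single f n) = n :=
  Finsupp.liftAddHom_apply_single _ _ _

lemma coeffSum_single {K : SComplex S} (B : Finset ℕ) {f : Face K (0 + 1)} {v : ℕ}
    (hv : f.1 = {v}) (n : ℤ) : coeffSum K B (Finsupp.single f n) = if v ∈ B then n else 0 := by
  simp only [coeffSum, Finsupp.liftAddHom_apply_single, hv, Finset.singleton_subset_iff]
  split_ifs <;> rfl

lemma bdry_single_vertex (K : SComplex S) (f : Face K (0 + 1)) (n : ℤ) :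
    bdry K (0 + 1) 0 (Finsupp.single f n) =
      Finsupp.single ⟨∅, K.empty_mem, Finset.card_empty ▸ rfl⟩ n := by
  obtain ⟨v, hv⟩ := f.exists_eq_singleton
  obtain ⟨_, _, _⟩ := f
  subst hv
  have he : ∅ ∈ K.faces ∧ ((∅ : Finset ℕ).card : ℤ) = 0 := ⟨K.empty_mem, by simp⟩
  rw [bdry, Finsupp.liftAddHom_apply_single, zmultiplesHom_apply, Finset.sum_singleton,
    Finset.erase_singleton, dif_pos he]
  simp only [Finset.filter_singleton, lt_irrefl, if_false, Finset.card_empty, pow_zero,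
    Finsupp.smul_single, smul_eq_mul, mul_one]

lemma bdry_zero_eq_single_augmentation (K : SComplex S) (z : Chains K (0 + 1)) :
    bdry K (0 + 1) 0 z =
      Finsupp.single ⟨∅, K.empty_mem, Finset.card_empty ▸ rfl⟩ (augmentation K z) := by
  induction z using Finsupp.induction_linear with
  | zero => simp
  | add f g hf hg => rw [map_add, hf, hg, map_add, Finsupp.single_add]
  | single f n => rw [bdry_single_vertex, augmentation_single]

lemma mem_cycles_zero_iff {K : SComplex S} {z : Chains K (0 + 1)} :
    z ∈ cycles K 0 ↔ augmentation K z = 0 := by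
  rw [AddMonoidHom.mem_ker, bdry_zero_eq_single_augmentation, Finsupp.single_eq_zero]

lemma bdry_single_edge (K : SComplex S) {a b : ℕ} (hab : a < b) {e : Face K (0 + 2)}
    (he : e.1 = {a, b}) {fa fb : Face K (0 + 1)} (ha : fa.1 = {a}) (hb : fb.1 = {b}) :
    bdry K (0 + 2) (0 + 1) (Finsupp.single e 1) = Finsupp.single fb 1 - Finsupp.single fa 1 := by
  have hmem := e.2.1
  cases e; cases fa; cases fb
  dsimp only at he ha hb hmem
  subst he ha hb
  have ha_notMem : a ∉ ({b} : Finset ℕ) := by simp [hab.ne]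
  have hea : ({a, b} : Finset ℕ).erase a = {b} := Finset.erase_insert ha_notMem
  have heb : ({a, b} : Finset ℕ).erase b = {a} := by
    rw [Finset.pair_comm]; exact Finset.erase_insert (by simp [hab.ne'])
  have hlt_a : ({a, b} : Finset ℕ).filter (· < a) = ∅ := by
    simp [Finset.filter_insert, Finset.filter_singleton, hab.not_gt]
  have hlt_b : ({a, b} : Finset ℕ).filter (· < b) = {a} := by
    simp [Finset.filter_insert, Finset.filter_singleton, hab]
  rw [bdry, Finsupp.liftAddHom_apply_single, zmultiplesHom_apply, one_zsmul,
    Finset.sum_insert ha_notMem, Finset.sum_singleton,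
    dif_pos ⟨K.down_closed hmem (Finset.erase_subset _ _), by simp [hea]⟩,
    dif_pos ⟨K.down_closed hmem (Finset.erase_subset _ _), by simp [heb]⟩]
  simp only [hlt_a, hlt_b, hea, heb, Finset.card_empty, Finset.card_singleton, pow_zero, pow_one,
    one_zsmul, neg_one_zsmul]
  abel

lemma single_sub_single_mem_range_bdry {K : SComplex S} {a b : ℕ} (h : EdgeRel K a b)
    {fa fb : Face K (0 + 1)} (ha : fa.1 = {a}) (hb : fb.1 = {b}) :
    Finsupp.single fb (1 : ℤ) - Finsupp.single fa 1 ∈ (bdry K (0 + 2) (0 + 1)).range := by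
  rcases lt_trichotomy a b with hab | rfl | hba
  · exact ⟨_, bdry_single_edge K hab (e := ⟨{a, b}, h, by simp [hab.ne]⟩) rfl ha hb⟩
  · rw [Subtype.ext (ha.trans hb.symm), sub_self]
    exact zero_mem _
  · rw [← neg_sub]
    exact neg_mem ⟨_, bdry_single_edge K hba
      (e := ⟨{b, a}, Finset.pair_comm a b ▸ h, by simp [hba.ne]⟩) rfl hb ha⟩

lemma coeffSum_bdry {K : SComplex S} {B : Finset ℕ}
    (hB : ∀ a b, EdgeRel K a b → (a ∈ B ↔ b ∈ B)) (c : Chains K (0 + 2)) :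
    coeffSum K B (bdry K (0 + 2) (0 + 1) c) = 0 := by
  induction c using Finsupp.induction_linear with
  | zero => simp
  | add f g hf hg => rw [map_add, map_add, hf, hg, add_zero]
  | single e n =>
    obtain ⟨a, b, hab, he⟩ := e.exists_lt_eq_pair
    have hedge : EdgeRel K a b := by rw [EdgeRel, ← he]; exact e.2.1
    rw [← Finsupp.smul_single_one, map_zsmul, map_zsmul,
      bdry_single_edge K hab he (fa := ⟨{a}, K.down_closed hedge (by simp), by simp⟩)
        (fb := ⟨{b}, K.down_closed hedge (by simp), by simp⟩) rfl rfl,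
      map_sub, coeffSum_single B rfl, coeffSum_single B rfl]
    simp [hB a b hedge]

lemma mem_iff_of_reach {K : SComplex S} {B : Finset ℕ}
    (hB : ∀ a b, EdgeRel K a b → (a ∈ B ↔ b ∈ B)) {a b : ℕ} (h : Reach K a b) :
    a ∈ B ↔ b ∈ B := by
  induction h with
  | refl => rfl
  | tail _ hbc ih => exact ih.trans (hB _ _ hbc)

section DisjointSimplices

variable {K : SComplex S} {A B : Finset ℕ}

lemma singleton_mem_iff (hK : ∀ s, s ∈ K.faces ↔ s ⊆ A ∨ s ⊆ B) (v : ℕ) :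
    {v} ∈ K.faces ↔ v ∈ A ∨ v ∈ B := by
  simp [hK]

lemma edgeRel_iff (hK : ∀ s, s ∈ K.faces ↔ s ⊆ A ∨ s ⊆ B) {a b : ℕ} :
    EdgeRel K a b ↔ (a ∈ A ∧ b ∈ A) ∨ (a ∈ B ∧ b ∈ B) := by
  simp [EdgeRel, hK, Finset.insert_subset_iff]

lemma mem_iff_of_edgeRel (hK : ∀ s, s ∈ K.faces ↔ s ⊆ A ∨ s ⊆ B) (hAB : Disjoint A B)
    {a b : ℕ} (h : EdgeRel K a b) : a ∈ B ↔ b ∈ B := by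
  rcases (edgeRel_iff hK).1 h with ⟨ha, hb⟩ | ⟨ha, hb⟩
  · exact iff_of_false (Finset.disjoint_left.1 hAB ha) (Finset.disjoint_left.1 hAB hb)
  · exact iff_of_true ha hb

lemma reach_of_mem_left (hK : ∀ s, s ∈ K.faces ↔ s ⊆ A ∨ s ⊆ B) {a b : ℕ}
    (ha : a ∈ A) (hb : b ∈ A) : Reach K a b :=
  .single ((edgeRel_iff hK).2 (.inl ⟨ha, hb⟩))

lemma reach_of_mem_right (hK : ∀ s, s ∈ K.faces ↔ s ⊆ A ∨ s ⊆ B) {a b : ℕ}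
    (ha : a ∈ B) (hb : b ∈ B) : Reach K a b :=
  .single ((edgeRel_iff hK).2 (.inr ⟨ha, hb⟩))

lemma reach_of_mem_iff (hK : ∀ s, s ∈ K.faces ↔ s ⊆ A ∨ s ⊆ B) {a b : ℕ}
    (ha : {a} ∈ K.faces) (hb : {b} ∈ K.faces) (hab : a ∈ B ↔ b ∈ B) : Reach K a b := by
  by_cases hbB : b ∈ B
  · exact reach_of_mem_right hK (hab.2 hbB) hbB
  · have haA := ((singleton_mem_iff hK a).1 ha).resolve_right (mt hab.1 hbB)
    exact reach_of_mem_left hK haA (((singleton_mem_iff hK b).1 hb).resolve_right hbB)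

lemma numComponents_eq_two (hK : ∀ s, s ∈ K.faces ↔ s ⊆ A ∨ s ⊆ B) (hAB : Disjoint A B)
    {x y : ℕ} (hx : x ∈ A) (hy : y ∈ B) : numComponents K = 2 := by
  let inB : Quot (fun a b : {v : ℕ // {v} ∈ K.faces} => Reach K a.1 b.1) → Bool :=
    Quot.lift (fun v => decide (v.1 ∈ B)) fun _ _ h =>
      decide_eq_decide.2 (mem_iff_of_reach (fun _ _ => mem_iff_of_edgeRel hK hAB) h)
  have hinB : Function.Bijective inB := by
    refine ⟨fun p q hpq => ?_, fun b => ?_⟩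
    · induction p using Quot.ind with | mk a => ?_
      induction q using Quot.ind with | mk b => ?_
      exact Quot.sound (reach_of_mem_iff hK a.2 b.2 (decide_eq_decide.1 hpq))
    · cases b
      · exact ⟨Quot.mk _ ⟨x, (singleton_mem_iff hK x).2 (.inl hx)⟩,
          by simp [inB, Finset.disjoint_left.1 hAB hx]⟩
      · exact ⟨Quot.mk _ ⟨y, (singleton_mem_iff hK y).2 (.inr hy)⟩, by simp [inB, hy]⟩
  rw [numComponents, Nat.card_congr (Equiv.ofBijective inB hinB), Nat.card_eq_fintype_card,
    Fintype.card_bool]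

lemma augmentation_eq_coeffSum_add_coeffSum (hK : ∀ s, s ∈ K.faces ↔ s ⊆ A ∨ s ⊆ B)
    (hAB : Disjoint A B) (z : Chains K (0 + 1)) :
    augmentation K z = coeffSum K A z + coeffSum K B z := by
  induction z using Finsupp.induction_linear with
  | zero => simp
  | add f g hf hg => rw [map_add, map_add, map_add, hf, hg]; abel
  | single f n =>
    obtain ⟨v, hv⟩ := f.exists_eq_singleton
    rw [augmentation_single, coeffSum_single A hv, coeffSum_single B hv]
    rcases (singleton_mem_iff hK v).1 (hv ▸ f.2.1) with hvA | hvB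
    · rw [if_pos hvA, if_neg (Finset.disjoint_left.1 hAB hvA), add_zero]
    · rw [if_pos hvB, if_neg (Finset.disjoint_right.1 hAB hvB), zero_add]

lemma sub_coeffSum_smul_mem_range_bdry (hK : ∀ s, s ∈ K.faces ↔ s ⊆ A ∨ s ⊆ B)
    (hAB : Disjoint A B) {x y : ℕ} (hx : x ∈ A) (hy : y ∈ B) {fx fy : Face K (0 + 1)}
    (hfx : fx.1 = {x}) (hfy : fy.1 = {y}) (z : Chains K (0 + 1)) :
    z - coeffSum K A z • Finsupp.single fx 1 - coeffSum K B z • Finsupp.single fy 1 ∈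
      (bdry K (0 + 2) (0 + 1)).range := by
  induction z using Finsupp.induction_linear with
  | zero => simp
  | add f g hf hg =>
    convert add_mem hf hg using 1
    simp only [map_add, add_smul]
    abel
  | single f n =>
    obtain ⟨v, hv⟩ := f.exists_eq_singleton
    rw [coeffSum_single A hv, coeffSum_single B hv, ← Finsupp.smul_single_one f n]
    rcases (singleton_mem_iff hK v).1 (hv ▸ f.2.1) with hvA | hvB
    · rw [if_pos hvA, if_neg (Finset.disjoint_left.1 hAB hvA), zero_smul, sub_zero, ← smul_sub]
      exact zsmul_mem (single_sub_single_mem_range_bdry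
        ((edgeRel_iff hK).2 (.inl ⟨hx, hvA⟩)) hfx hv) n
    · rw [if_pos hvB, if_neg (Finset.disjoint_right.1 hAB hvB), zero_smul, sub_zero, ← smul_sub]
      exact zsmul_mem (single_sub_single_mem_range_bdry
        ((edgeRel_iff hK).2 (.inr ⟨hy, hvB⟩)) hfy hv) n

theorem bijective_zmultiplesHom_RH_zero (hK : ∀ s, s ∈ K.faces ↔ s ⊆ A ∨ s ⊆ B)
    (hAB : Disjoint A B) {x y : ℕ} (hx : x ∈ A) (hy : y ∈ B) {fx fy : Face K (0 + 1)}
    (hfx : fx.1 = {x}) (hfy : fy.1 = {y})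
    (hc : Finsupp.single fy 1 - Finsupp.single fx 1 ∈ cycles K 0) :
    Function.Bijective (zmultiplesHom (RH K 0) (QuotientAddGroup.mk ⟨_, hc⟩)) := by
  have hcoeff : coeffSum K B (Finsupp.single fy 1 - Finsupp.single fx 1) = 1 := by
    simp [coeffSum_single B hfy, coeffSum_single B hfx, hy, Finset.disjoint_left.1 hAB hx]
  refine ⟨(injective_iff_map_eq_zero _).2 fun n hn => ?_, fun q => ?_⟩
  · rw [zmultiplesHom_apply, ← QuotientAddGroup.mk_zsmul, QuotientAddGroup.eq_zero_iff] at hn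
    obtain ⟨c, hbc⟩ := hn
    have := congrArg (coeffSum K B) hbc
    rw [coeffSum_bdry (fun _ _ => mem_iff_of_edgeRel hK hAB) c] at this
    simpa [hcoeff] using this.symm
  · induction q using QuotientAddGroup.induction_on with | _ z => ?_
    refine ⟨coeffSum K B z, ?_⟩
    have hA : coeffSum K A z = -coeffSum K B z := by
      have := augmentation_eq_coeffSum_add_coeffSum hK hAB z.1
      rw [mem_cycles_zero_iff.1 z.2] at this
      omega
    rw [zmultiplesHom_apply, ← QuotientAddGroup.mk_zsmul, QuotientAddGroup.eq_iff_sub_mem,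
      AddSubgroup.mem_comap]
    convert neg_mem (sub_coeffSum_smul_mem_range_bdry hK hAB hx hy hfx hfy z.1) using 1
    simp only [hA, AddSubgroup.coe_subtype, AddSubgroup.coe_sub, AddSubgroup.coe_zsmul, neg_smul,
      smul_sub]
    abel

end DisjointSimplices

lemma restrict_simplexWedge_faces (ρ τ J s : Finset ℕ) :
    s ∈ ((simplexWedge ρ τ).restrict J).faces ↔ s ⊆ J ∩ ρ ∨ s ⊆ J ∩ τ := by
  constructor
  · rintro ⟨t, ht | ht, rfl⟩
    · exact .inl (Finset.inter_comm t J ▸ Finset.inter_subset_inter_left ht)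
    · exact .inr (Finset.inter_comm t J ▸ Finset.inter_subset_inter_left ht)
  · rintro (h | h)
    · exact ⟨s, .inl (h.trans Finset.inter_subset_right),
        (Finset.inter_eq_left.2 (h.trans Finset.inter_subset_left)).symm⟩
    · exact ⟨s, .inr (h.trans Finset.inter_subset_right),
        (Finset.inter_eq_left.2 (h.trans Finset.inter_subset_left)).symm⟩

theorem simplexWedge_two_components_general (ρ τ J : Finset ℕ)
    (hJσ : J ∩ (ρ ∩ τ) = ∅) (x y : ℕ) (hx : x ∈ J ∩ ρ) (hy : y ∈ J ∩ τ) :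
    numComponents ((simplexWedge ρ τ).restrict J) = 2 ∧
    (∀ a b : ℕ, a ∈ J ∩ ρ → b ∈ J ∩ ρ → Reach ((simplexWedge ρ τ).restrict J) a b) ∧
    (∀ a b : ℕ, a ∈ J ∩ τ → b ∈ J ∩ τ → Reach ((simplexWedge ρ τ).restrict J) a b) ∧
    ¬ Reach ((simplexWedge ρ τ).restrict J) x y ∧
    (∀ (hy1 : ({y} : Finset ℕ) ∈ ((simplexWedge ρ τ).restrict J).faces ∧
          ((({y} : Finset ℕ).card : ℤ) = 0 + 1))
       (hx1 : ({x} : Finset ℕ) ∈ ((simplexWedge ρ τ).restrict J).faces ∧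
          ((({x} : Finset ℕ).card : ℤ) = 0 + 1))
       (hc : Finsupp.single (⟨{y}, hy1⟩ : Face ((simplexWedge ρ τ).restrict J) (0 + 1)) (1 : ℤ)
              - Finsupp.single (⟨{x}, hx1⟩ : Face ((simplexWedge ρ τ).restrict J) (0 + 1)) (1 : ℤ)
            ∈ cycles ((simplexWedge ρ τ).restrict J) 0),
      Function.Bijective
        ⇑(zmultiplesHom (RH ((simplexWedge ρ τ).restrict J) 0)
            (QuotientAddGroup.mk (⟨_, hc⟩ : cycles ((simplexWedge ρ τ).restrict J) 0)))) := by
  have hK := restrict_simplexWedge_faces ρ τ J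
  have hAB : Disjoint (J ∩ ρ) (J ∩ τ) := by
    rwa [Finset.disjoint_iff_inter_eq_empty, ← Finset.inter_inter_distrib_left]
  refine ⟨numComponents_eq_two hK hAB hx hy, fun _ _ => reach_of_mem_left hK,
    fun _ _ => reach_of_mem_right hK, fun hxy => ?_,
    fun _ _ _ => bijective_zmultiplesHom_RH_zero hK hAB hx hy rfl rfl _⟩
  have hxB := (mem_iff_of_reach (fun _ _ => mem_iff_of_edgeRel hK hAB) hxy).2 hy
  exact Finset.disjoint_left.1 hAB hx hxB

/-- Let `σ = ρ ∩ τ` and `L = ⟨ρ⟩ ⊔_σ ⟨τ⟩`. If `J ⊆ ρ ∪ τ` meets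
both `ρ` and `τ` but not `σ`, then `L_J` has exactly two path components (namely
`⟨ρ⟩_J` and `⟨τ⟩_J`), and `H̃_0(L_J)` is infinite cyclic generated by `[y] - [x]`
for any vertices `x ∈ J ∩ ρ`, `y ∈ J ∩ τ`. -/
theorem simplexWedge_two_components (ρ τ J : Finset ℕ) (hJ : J ⊆ ρ ∪ τ)
    (hJσ : J ∩ (ρ ∩ τ) = ∅) (x y : ℕ) (hx : x ∈ J ∩ ρ) (hy : y ∈ J ∩ τ) :
    numComponents ((simplexWedge ρ τ).restrict J) = 2 ∧
    (∀ a b : ℕ, a ∈ J ∩ ρ → b ∈ J ∩ ρ → Reach ((simplexWedge ρ τ).restrict J) a b) ∧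
    (∀ a b : ℕ, a ∈ J ∩ τ → b ∈ J ∩ τ → Reach ((simplexWedge ρ τ).restrict J) a b) ∧
    ¬ Reach ((simplexWedge ρ τ).restrict J) x y ∧
    (∀ (hy1 : ({y} : Finset ℕ) ∈ ((simplexWedge ρ τ).restrict J).faces ∧
          ((({y} : Finset ℕ).card : ℤ) = 0 + 1))
       (hx1 : ({x} : Finset ℕ) ∈ ((simplexWedge ρ τ).restrict J).faces ∧
          ((({x} : Finset ℕ).card : ℤ) = 0 + 1))
       (hc : Finsupp.single (⟨{y}, hy1⟩ : Face ((simplexWedge ρ τ).restrict J) (0 + 1)) (1 : ℤ)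
              - Finsupp.single (⟨{x}, hx1⟩ : Face ((simplexWedge ρ τ).restrict J) (0 + 1)) (1 : ℤ)
            ∈ cycles ((simplexWedge ρ τ).restrict J) 0),
      Function.Bijective
        ⇑(zmultiplesHom (RH ((simplexWedge ρ τ).restrict J) 0)
            (QuotientAddGroup.mk (⟨_, hc⟩ : cycles ((simplexWedge ρ τ).restrict J) 0)))) :=
  simplexWedge_two_components_general ρ τ J hJσ x y hx hy

end DH
end

section
/- Let K = K¹ ⊔_σ K² be a face sum of simplicial complexes on a finite totally ordered vertex set, with ρ = V(K¹) and τ = V(K²). If J is a subset of the vertex set with J ∩ σ = ∅, J ∩ ρ ≠ ∅ and J ∩ τ ≠ ∅, then the number of path components of K_J equals n₁ + n₂, where nᵢ is the number of path components of Kⁱ_J; consequently H̃_0(K_J) is free abelian of rank n₁ + n₂ − 1. -/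
set_option maxHeartbeats 1000000
set_option synthInstance.maxHeartbeats 1000000

open scoped DirectSum

namespace DH

variable {S : Finset ℕ}

/-!
Since `J` misses `σ`, the full subcomplexes `K¹_J` and `K²_J` share only the empty face, so an edge
path of `K_J` never leaves the side it starts in: the components of `K_J` are those of `K¹_J`
together with those of `K²_J`.

For the homology, sending a vertex to its component identifies `H̃₀(L)` with the `ℤ`-chains of
total coefficient zero on the set of components. Indeed the `0`-cycles are the chains of total
coefficient zero, and since the boundary of an edge is the difference of its endpoints, the
boundaries are exactly the chains whose coefficients sum to zero on every component. Sum-zero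
chains on `c ≥ 1` points are free of rank `c - 1`, coordinatised by all points but one.
-/

section Augmentation

variable {Q : Type*}

noncomputable def degreeKerEquivOfNe [Fintype Q] [DecidableEq Q] (q₀ : Q) :
    (Finsupp.degree : (Q →₀ ℤ) →+ ℤ).ker ≃+ ({q // q ≠ q₀} → ℤ) where
  toFun z q := (z : Q →₀ ℤ) q
  invFun f := ⟨Finsupp.equivFunOnFinite.symm fun q => if h : q = q₀ then -∑ i, f i else f ⟨q, h⟩,
    by simp [Finsupp.degree_eq_sum, Fintype.sum_eq_add_sum_subtype_ne _ q₀,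
      fun q : {q // q ≠ q₀} => q.2]⟩
  left_inv := by
    rintro ⟨z, hz⟩
    ext q
    have hz : z q₀ + ∑ q : {q // q ≠ q₀}, z q = 0 := by
      rwa [AddMonoidHom.mem_ker, Finsupp.degree_eq_sum,
        Fintype.sum_eq_add_sum_subtype_ne _ q₀] at hz
    by_cases h : q = q₀
    · subst h
      simp only [Finsupp.equivFunOnFinite_symm_apply_apply, dite_true]
      linarith
    · simp [h]
  right_inv f := by
    ext q
    simp [q.2]
  map_add' _ _ := rfl

noncomputable def degreeKerEquiv [Finite Q] [Nonempty Q] :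
    (Finsupp.degree : (Q →₀ ℤ) →+ ℤ).ker ≃+ (Fin (Nat.card Q - 1) → ℤ) :=
  letI := Fintype.ofFinite Q
  letI := Classical.decEq Q
  let q₀ := Classical.arbitrary Q
  (degreeKerEquivOfNe q₀).trans (LinearEquiv.funCongrLeft ℤ ℤ
    (Fintype.equivFinOfCardEq (α := {q // q ≠ q₀})
      (by rw [Nat.card_eq_fintype_card, ← Set.card_ne_eq q₀]; rfl)).symm).toAddEquiv

end Augmentation

namespace SComplex

variable (L : SComplex S)

abbrev Vertex : Type := {x : ℕ // ({x} : Finset ℕ) ∈ L.faces}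

abbrev Component : Type := Quot fun a b : L.Vertex => Reach L a.1 b.1

instance : Finite L.Vertex :=
  (S.finite_toSet.subset fun _ hx => L.faces_subset hx (Finset.mem_singleton_self _)).to_subtype

instance [Nonempty L.Vertex] : Nonempty L.Component := .map (Quot.mk _) ‹_›

instance : Std.Symm (EdgeRel L) where
  symm a b (h : _ ∈ L.faces) := show _ ∈ L.faces by rwa [Finset.pair_comm]

variable {L}

lemma reach_equivalence : Equivalence fun a b : L.Vertex => Reach L a.1 b.1 where
  refl _ := Relation.ReflTransGen.refl
  symm h := Relation.ReflTransGen.stdSymm.symm _ _ h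
  trans := Relation.ReflTransGen.trans

lemma component_mk_eq_iff {a b : L.Vertex} :
    (Quot.mk _ a : L.Component) = Quot.mk _ b ↔ Reach L a.1 b.1 :=
  Quot.eq.trans reach_equivalence.eqvGen_iff

def vertexFace (x : L.Vertex) : Face L 1 := ⟨{x.1}, x.2, by simp⟩

lemma vertexFace_bijective : Function.Bijective (vertexFace (L := L)) := by
  refine ⟨fun x y h => Subtype.ext (Finset.singleton_injective (congrArg Subtype.val h)), ?_⟩
  rintro ⟨σ, hσ, hcard⟩
  obtain ⟨a, rfl⟩ := Finset.card_eq_one.mp (by exact_mod_cast hcard)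
  exact ⟨⟨a, hσ⟩, rfl⟩

noncomputable def componentOfFace (σ : Face L 1) : L.Component :=
  Quot.mk _ ((Equiv.ofBijective _ vertexFace_bijective).symm σ)

lemma componentOfFace_vertexFace (x : L.Vertex) : componentOfFace (vertexFace x) = Quot.mk _ x :=
  congrArg _ ((Equiv.ofBijective _ vertexFace_bijective).symm_apply_apply x)

noncomputable def faceOfComponent (q : L.Component) : Face L 1 := vertexFace q.out

lemma componentOfFace_faceOfComponent (q : L.Component) :
    componentOfFace (faceOfComponent q) = q := by
  rw [faceOfComponent, componentOfFace_vertexFace, Quot.out_eq]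

noncomputable def componentChain : Chains L 1 →+ (L.Component →₀ ℤ) :=
  Finsupp.mapDomain.addMonoidHom componentOfFace

open Classical in
lemma bdry_single_one {j k : ℤ} {s : Finset ℕ} (hs : s ∈ L.faces ∧ (s.card : ℤ) = j) :
    bdry L j k (Finsupp.single ⟨s, hs⟩ 1) = ∑ x ∈ s, ((-1 : ℤ) ^ (s.filter (· < x)).card) •
      if h : s.erase x ∈ L.faces ∧ ((s.erase x).card : ℤ) = k then
        Finsupp.single ⟨s.erase x, h⟩ 1 else 0 := by
  rw [bdry, Finsupp.liftAddHom_apply_single, zmultiplesHom_apply, one_smul]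

lemma bdry_vertexFace (x : L.Vertex) :
    bdry L 1 0 (Finsupp.single (vertexFace x) 1) = Finsupp.single ⟨∅, L.empty_mem, rfl⟩ 1 := by
  rw [vertexFace, bdry_single_one, Finset.sum_singleton, dif_pos (by simpa using L.empty_mem)]
  simp [Finset.filter_singleton]

lemma bdry_edge {a b : ℕ} (hab : a < b) (h : ({a, b} : Finset ℕ) ∈ L.faces) :
    bdry L 2 1 (Finsupp.single ⟨{a, b}, h, by simp [Finset.card_pair hab.ne]⟩ 1) =
      Finsupp.single (vertexFace ⟨b, L.down_closed h (by simp)⟩) 1 -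
        Finsupp.single (vertexFace ⟨a, L.down_closed h (by simp)⟩) 1 := by
  have hea : ({a, b} : Finset ℕ).erase a = {b} := Finset.erase_insert (by simpa using hab.ne)
  have heb : ({a, b} : Finset ℕ).erase b = {a} := by simp [Finset.erase_insert_of_ne hab.ne]
  rw [bdry_single_one, Finset.sum_pair hab.ne,
    dif_pos (by simpa [hea] using L.down_closed h (by simp)),
    dif_pos (by simpa [heb] using L.down_closed h (by simp))]
  simp [hea, heb, Finset.filter_insert, Finset.filter_singleton, hab, hab.not_gt, sub_eq_add_neg,
    vertexFace]

lemma single_sub_single_mem_range_of_edge {a b : ℕ} (h : ({a, b} : Finset ℕ) ∈ L.faces) :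
    Finsupp.single (vertexFace ⟨b, L.down_closed h (by simp)⟩) 1 -
      Finsupp.single (vertexFace ⟨a, L.down_closed h (by simp)⟩) 1 ∈ (bdry L 2 1).range := by
  rcases lt_trichotomy a b with hab | rfl | hba
  · exact ⟨_, bdry_edge hab h⟩
  · simp
  · rw [Finset.pair_comm] at h
    exact ⟨-_, by rw [map_neg, bdry_edge hba h, neg_sub]⟩

lemma single_sub_single_mem_range_of_reach {x : L.Vertex} {b : ℕ} (h : Reach L x.1 b)
    (hb : ({b} : Finset ℕ) ∈ L.faces) :
    Finsupp.single (vertexFace ⟨b, hb⟩) 1 - Finsupp.single (vertexFace x) 1 ∈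
      (bdry L 2 1).range := by
  induction h with
  | refl => simp
  | tail _ hbc ih =>
    have := add_mem (single_sub_single_mem_range_of_edge hbc) (ih (L.down_closed hbc (by simp)))
    rwa [sub_add_sub_cancel] at this

lemma componentChain_bdry (c : Chains L 2) : componentChain (bdry L 2 1 c) = 0 := by
  suffices componentChain.comp (bdry L 2 1) = 0 from DFunLike.congr_fun this c
  ext ⟨s, hs, hcard⟩ : 2
  obtain ⟨a, b, hab, rfl⟩ : ∃ a b, a < b ∧ s = {a, b} := by
    obtain ⟨a, b, hne, rfl⟩ := Finset.card_eq_two.mp (by exact_mod_cast hcard)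
    rcases hne.lt_or_gt with h | h
    exacts [⟨a, b, h, rfl⟩, ⟨b, a, h, Finset.pair_comm a b⟩]
  rw [AddMonoidHom.comp_apply, AddMonoidHom.comp_apply, Finsupp.singleAddHom_apply,
    bdry_edge hab hs, map_sub, AddMonoidHom.zero_comp, AddMonoidHom.zero_apply, sub_eq_zero]
  simp only [componentChain, Finsupp.mapDomain.addMonoidHom_apply, Finsupp.mapDomain_single,
    componentOfFace_vertexFace]
  congr 1
  exact Quot.sound (.single (by rwa [EdgeRel, Finset.pair_comm]))

lemma sub_mapDomain_mem_range_bdry (z : Chains L 1) :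
    z - z.mapDomain (faceOfComponent ∘ componentOfFace) ∈ (bdry L 2 1).range := by
  induction z using Finsupp.induction_linear with
  | zero => simp
  | add z w hz hw =>
    convert add_mem hz hw using 1
    rw [Finsupp.mapDomain_add]
    abel
  | single σ n =>
    obtain ⟨x, rfl⟩ := vertexFace_bijective.2 σ
    have hreach : Reach L (Quot.mk _ x : L.Component).out.1 x.1 :=
      component_mk_eq_iff.1 (Quot.out_eq _)
    rw [Finsupp.mapDomain_single, Function.comp_apply, componentOfFace_vertexFace,
      ← Finsupp.smul_single_one _ n, ← Finsupp.smul_single_one _ n, ← smul_sub]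
    exact zsmul_mem (single_sub_single_mem_range_of_reach hreach x.2) n

lemma mem_range_bdry_iff {z : Chains L 1} : z ∈ (bdry L 2 1).range ↔ componentChain z = 0 := by
  refine ⟨fun ⟨c, hc⟩ => hc ▸ componentChain_bdry c, fun hz => ?_⟩
  have := sub_mapDomain_mem_range_bdry z
  rwa [Finsupp.mapDomain_comp, show z.mapDomain componentOfFace = 0 from hz,
    Finsupp.mapDomain_zero, sub_zero] at this

lemma bdry_one_zero :
    bdry L 1 0 = (Finsupp.singleAddHom ⟨∅, L.empty_mem, rfl⟩).comp Finsupp.degree := by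
  ext σ : 2
  obtain ⟨x, rfl⟩ := vertexFace_bijective.2 σ
  simp [bdry_vertexFace]

lemma mem_cycles_zero_iff {z : Chains L 1} : z ∈ cycles L 0 ↔ z.degree = 0 := by
  show bdry L 1 0 z = 0 ↔ _
  simp [bdry_one_zero]

noncomputable def cyclesZeroToDegreeKer :
    cycles L 0 →+ (Finsupp.degree : (L.Component →₀ ℤ) →+ ℤ).ker :=
  (componentChain.comp (cycles L 0).subtype).codRestrict _ fun z => by
    simpa [componentChain] using mem_cycles_zero_iff.1 z.2

lemma cyclesZeroToDegreeKer_surjective : Function.Surjective (cyclesZeroToDegreeKer (L := L)) := by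
  rintro ⟨g, hg⟩
  refine ⟨⟨g.mapDomain faceOfComponent, mem_cycles_zero_iff.2 ?_⟩, Subtype.ext ?_⟩
  · simpa using hg
  · show (g.mapDomain faceOfComponent).mapDomain componentOfFace = g
    rw [← Finsupp.mapDomain_comp, show componentOfFace ∘ faceOfComponent = id from
      funext componentOfFace_faceOfComponent, Finsupp.mapDomain_id]

lemma ker_cyclesZeroToDegreeKer : (cyclesZeroToDegreeKer (L := L)).ker = boundariesIn L 0 := by
  ext z
  rw [AddMonoidHom.mem_ker, AddSubgroup.mem_comap, AddSubgroup.coe_subtype]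
  exact (Subtype.ext_iff.trans mem_range_bdry_iff.symm)

noncomputable def rhZeroEquivDegreeKer :
    RH L 0 ≃+ (Finsupp.degree : (L.Component →₀ ℤ) →+ ℤ).ker :=
  (QuotientAddGroup.quotientAddEquivOfEq ker_cyclesZeroToDegreeKer.symm).trans
    (QuotientAddGroup.quotientKerEquivOfSurjective _ cyclesZeroToDegreeKer_surjective)

noncomputable def rhZeroEquiv [Nonempty L.Vertex] : RH L 0 ≃+ (Fin (numComponents L - 1) → ℤ) :=
  rhZeroEquivDegreeKer.trans degreeKerEquiv

def componentMap {L₁ L₂ : SComplex S} (h : L₁.faces ⊆ L₂.faces) : L₁.Component → L₂.Component :=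
  Quot.map (fun x => ⟨x.1, h x.2⟩) fun _ _ =>
    Relation.ReflTransGen.mono (p := EdgeRel L₂) (fun _ _ e => h e) _ _

@[simp]
lemma componentMap_mk {L₁ L₂ : SComplex S} (h : L₁.faces ⊆ L₂.faces) (x : L₁.Vertex) :
    componentMap h (Quot.mk _ x) = Quot.mk _ ⟨x.1, h x.2⟩ :=
  rfl

lemma componentMap_injective {L₁ L₂ : SComplex S} {h : L₁.faces ⊆ L₂.faces}
    (hreach : ∀ {a b : ℕ}, ({a} : Finset ℕ) ∈ L₁.faces → Reach L₂ a b → Reach L₁ a b) :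
    Function.Injective (componentMap h) := by
  rintro ⟨a⟩ ⟨b⟩ hab
  rw [componentMap_mk, componentMap_mk] at hab
  exact component_mk_eq_iff.2 (hreach a.2 (component_mk_eq_iff.1 hab))

section Union

variable {L₁ L₂ : SComplex S}

lemma reach_of_faces_union (hunion : L.faces = L₁.faces ∪ L₂.faces)
    (hdisj : ∀ x, ({x} : Finset ℕ) ∈ L₁.faces → ({x} : Finset ℕ) ∉ L₂.faces) {a b : ℕ}
    (ha : ({a} : Finset ℕ) ∈ L₁.faces) (h : Reach L a b) :
    Reach L₁ a b ∧ ({b} : Finset ℕ) ∈ L₁.faces := by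
  induction h with
  | refl => exact ⟨.refl, ha⟩
  | @tail b c _ hbc ih =>
    obtain ⟨hab, hb⟩ := ih
    have hbc₁ : ({b, c} : Finset ℕ) ∈ L₁.faces := (hunion.subset hbc).resolve_right
      fun hbc₂ => hdisj b hb (L₂.down_closed hbc₂ (by simp))
    exact ⟨hab.tail hbc₁, L₁.down_closed hbc₁ (by simp)⟩

lemma numComponents_eq_add_of_faces_union (hunion : L.faces = L₁.faces ∪ L₂.faces)
    (hdisj : ∀ x, ({x} : Finset ℕ) ∈ L₁.faces → ({x} : Finset ℕ) ∉ L₂.faces) :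
    numComponents L = numComponents L₁ + numComponents L₂ := by
  have hunion' : L.faces = L₂.faces ∪ L₁.faces := hunion.trans (Set.union_comm _ _)
  have hdisj' : ∀ x, ({x} : Finset ℕ) ∈ L₂.faces → ({x} : Finset ℕ) ∉ L₁.faces :=
    fun x h₂ h₁ => hdisj x h₁ h₂
  have h₁ : L₁.faces ⊆ L.faces := hunion ▸ Set.subset_union_left
  have h₂ : L₂.faces ⊆ L.faces := hunion' ▸ Set.subset_union_left
  have hinj : Function.Injective (Sum.elim (componentMap h₁) (componentMap h₂)) := by
    refine (componentMap_injective fun ha h => (reach_of_faces_union hunion hdisj ha h).1).sumElim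
      (componentMap_injective fun ha h => (reach_of_faces_union hunion' hdisj' ha h).1) ?_
    rintro ⟨a⟩ ⟨b⟩ hab
    rw [componentMap_mk, componentMap_mk] at hab
    exact hdisj b.1 (reach_of_faces_union hunion hdisj a.2 (component_mk_eq_iff.1 hab)).2 b.2
  have hsurj : Function.Surjective (Sum.elim (componentMap h₁) (componentMap h₂)) := by
    rintro ⟨x⟩
    rcases hunion.subset x.2 with hx | hx
    exacts [⟨.inl (Quot.mk _ ⟨x.1, hx⟩), componentMap_mk h₁ _⟩,
      ⟨.inr (Quot.mk _ ⟨x.1, hx⟩), componentMap_mk h₂ _⟩]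
  rw [numComponents, numComponents, numComponents, ← Nat.card_sum]
  exact (Nat.card_eq_of_bijective _ ⟨hinj, hsurj⟩).symm

end Union

lemma restrict_faces_union {K K₁ K₂ : SComplex S} (h : K.faces = K₁.faces ∪ K₂.faces)
    (J : Finset ℕ) :
    (K.restrict J).faces = (K₁.restrict J).faces ∪ (K₂.restrict J).faces := by
  ext τ
  simp only [SComplex.restrict, h, Set.mem_union, Set.mem_ofPred_eq]
  grind

lemma singleton_mem_restrict_iff {K : SComplex S} {J : Finset ℕ} {x : ℕ} :
    ({x} : Finset ℕ) ∈ (K.restrict J).faces ↔ ({x} : Finset ℕ) ∈ K.faces ∧ x ∈ J := by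
  refine ⟨fun ⟨σ, hσ, h⟩ => ?_, fun ⟨hx, hxJ⟩ => ⟨{x}, hx, by simp [hxJ]⟩⟩
  have hx : x ∈ σ ∩ J := h ▸ Finset.mem_singleton_self x
  exact ⟨K.down_closed hσ (Finset.singleton_subset_iff.2 (Finset.mem_inter.1 hx).1),
    (Finset.mem_inter.1 hx).2⟩

end SComplex

lemma IsFaceSum.singleton_notMem_restrict {K K₁ K₂ : SComplex S} {σ J : Finset ℕ}
    (hK : IsFaceSum K K₁ K₂ σ) (hJσ : J ∩ σ = ∅) (x : ℕ)
    (h₁ : ({x} : Finset ℕ) ∈ (K₁.restrict J).faces) :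
    ({x} : Finset ℕ) ∉ (K₂.restrict J).faces := by
  rw [SComplex.singleton_mem_restrict_iff] at h₁ ⊢
  rintro ⟨h₂, hxJ⟩
  have hxσ : ({x} : Finset ℕ) ⊆ σ := (hK.inter.subset ⟨h₁.1, h₂⟩ : _)
  simpa [hJσ] using Finset.mem_inter.2 ⟨hxJ, hxσ (Finset.mem_singleton_self x)⟩

theorem components_of_faceSum_general (S : Finset ℕ) (K K1 K2 : SComplex S) (σ : Finset ℕ)
    (hK : IsFaceSum K K1 K2 σ) (J : Finset ℕ)
    (hJσ : J ∩ σ = ∅) (hJρ : (J ∩ effVerts K1).Nonempty) :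
    numComponents (K.restrict J) =
      numComponents (K1.restrict J) + numComponents (K2.restrict J) ∧
    Nonempty (RH (K.restrict J) 0 ≃+
      (Fin (numComponents (K1.restrict J) + numComponents (K2.restrict J) - 1) → ℤ)) := by
  have hcount := SComplex.numComponents_eq_add_of_faces_union
    (SComplex.restrict_faces_union hK.union J) (hK.singleton_notMem_restrict hJσ)
  obtain ⟨x, hxJ, hxK₁⟩ : ∃ x ∈ J, ({x} : Finset ℕ) ∈ K1.faces := by
    obtain ⟨x, hx⟩ := hJρ
    simp only [effVerts, Finset.mem_inter, Finset.mem_filter] at hx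
    exact ⟨x, hx.1, hx.2.2⟩
  have : Nonempty (K.restrict J).Vertex :=
    ⟨⟨x, SComplex.singleton_mem_restrict_iff.2 ⟨hK.le1 hxK₁, hxJ⟩⟩⟩
  exact ⟨hcount, ⟨hcount ▸ SComplex.rhZeroEquiv⟩⟩

/-- For a face sum `K = K¹ ⊔_σ K²` with `ρ = V(K¹)`, `τ = V(K²)`,
if `J` misses `σ` but meets both `ρ` and `τ`, then the number of path components
of `K_J` equals `n₁ + n₂` where `nᵢ` is the number of path components of `Kⁱ_J`;
consequently `H̃_0(K_J)` is free abelian of rank `n₁ + n₂ - 1`. -/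
theorem components_of_faceSum (S : Finset ℕ) (K K1 K2 : SComplex S) (σ : Finset ℕ)
    (hK : IsFaceSum K K1 K2 σ) (J : Finset ℕ) (hJ : J ⊆ S)
    (hJσ : J ∩ σ = ∅) (hJρ : (J ∩ effVerts K1).Nonempty) (hJτ : (J ∩ effVerts K2).Nonempty) :
    numComponents (K.restrict J) =
      numComponents (K1.restrict J) + numComponents (K2.restrict J) ∧
    Nonempty (RH (K.restrict J) 0 ≃+
      (Fin (numComponents (K1.restrict J) + numComponents (K2.restrict J) - 1) → ℤ)) :=
  components_of_faceSum_general S K K1 K2 σ hK J hJσ hJρ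

end DH
end
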